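/- arXiv:2412.04241 — 11 statements merged into one kernel-verified Lean document; each statement's English description precedes it below -/
import Mathlib

section
/- In the formal power series ring ℚ[[t,x]] one has the identity log(1+x) · log((t;1+x)_∞) = ∑_{k≥0} (B_k/k!) · Li_{2−k}(t) · log(1+x)^k, where (t;1+x)_∞ is obtained from (t;q)_∞ by the substitution q = 1+x. Equivalently, with q = 1+x, log((t;q)_∞) = ∑_{k≥0} (B_k/k!) Li_{2−k}(t) log(1+x)^{k−1} as an identity in x^{−1}·ℚ[[t,x]]. -/
/-!
STATEMENT 1: In `ℚ[[t,x]]`,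
`log(1+x) · log((t;1+x)_∞) = ∑_{k ≥ 0} (B_k/k!) · Li_{2-k}(t) · log(1+x)^k`.

Here `(t;1+x)_∞`, the expansion at `q = 1+x` of the infinite Pochhammer symbol
`(t;q)_∞ = ∏_{n≥0}(1-qⁿt)`, is characterised (in `ℚ((x))[[t]]`) as the unique power
series `F` with constant term `1` satisfying the functional equation
`F(t) = (1-t)·F((1+x)·t)` of the infinite product.
-/

/-- `log(1+x) = ∑_{j ≥ 1} (-1)^{j+1} x^j / j ∈ ℚ[[x]]`. -/
noncomputable def logOnePlusX : PowerSeries ℚ :=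
  PowerSeries.mk fun j => if j = 0 then 0 else (-1 : ℚ) ^ (j + 1) / j

/-- The coefficient of `t^ℓ` in `Li_s(t) = ∑_{ℓ ≥ 1} ℓ^{-s} t^ℓ`. -/
noncomputable def liCoeff (s : ℤ) (ℓ : ℕ) : ℚ :=
  if ℓ = 0 then 0 else (ℓ : ℚ) ^ (-s)

/-- The `k`-th term `(B_k/k!) · Li_{2-k}(t) · log(1+x)^k`, an element of `ℚ[[x]][[t]]`;
`B_k` are the Bernoulli numbers with `B_1 = -1/2`. -/
noncomputable def bernTerm (k : ℕ) : PowerSeries (PowerSeries ℚ) :=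
  PowerSeries.mk fun ℓ =>
    ((bernoulli k / (k.factorial : ℚ)) * liCoeff (2 - (k : ℤ)) ℓ) • (logOnePlusX ^ k)

/-- `∑_{k ≥ 0} (B_k/k!) · Li_{2-k}(t) · log(1+x)^k ∈ ℚ[[t,x]]`, summed coefficientwise
(in each bidegree only finitely many `k` contribute, since `log(1+x)^k = O(x^k)`). -/
noncomputable def bernSum : PowerSeries (PowerSeries ℚ) :=
  PowerSeries.mk fun ℓ => PowerSeries.mk fun i =>
    ∑ᶠ k : ℕ, PowerSeries.coeff (R := ℚ) i (PowerSeries.coeff (R := PowerSeries ℚ) ℓ (bernTerm k))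

/-- The formal logarithm `log F = ∑_{k ≥ 1} (-1)^{k+1} (F-1)^k / k` of a power series
(with constant term `1`) over a field, defined coefficientwise. -/
noncomputable def plog {K : Type*} [Field K] (F : PowerSeries K) : PowerSeries K :=
  PowerSeries.mk fun b => ∑ k ∈ Finset.Icc 1 b,
    ((-1 : K) ^ (k + 1) / k) * PowerSeries.coeff (R := K) b ((F - 1) ^ k)

/-- `x` as a Laurent series in `ℚ((x))`. -/
noncomputable def xL : LaurentSeries ℚ := HahnSeries.single 1 1

/-!
Write `q = 1 + x`. Taking logarithms in `F(t) = (1 - t) F(qt)` shows that the coefficient `c_ℓ`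
of `t^ℓ` in `log F` satisfies `c_ℓ = -1/ℓ + q^ℓ c_ℓ`, i.e. `c_ℓ · ℓ (q^ℓ - 1) = 1`. The
coefficient of `t^ℓ` in the Bernoulli sum is `ℓ⁻² B(ℓ log q)` with `B(z) = z / (e^z - 1)`, and
since `exp (log (1 + x)) = 1 + x`, it equals `log q / (ℓ (q^ℓ - 1))`.
-/

open PowerSeries

theorem PowerSeries.coeff_pow_eq_zero_of_lt {R : Type*} [CommSemiring R] {u : R⟦X⟧}
    (hu : constantCoeff u = 0) {n k : ℕ} (h : n < k) : coeff n (u ^ k) = 0 :=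
  coeff_of_lt_order _ ((Nat.cast_lt.mpr h).trans_le (le_order_pow_of_constantCoeff_eq_zero k hu))

theorem PowerSeries.one_add_X_mul_derivative_log (A : Type*) [CommRing A] [Algebra ℚ A] :
    (1 + X) * d⁄dX A (log A) = 1 := by
  ext n
  rw [deriv_log, add_mul, one_mul, map_add]
  cases n with
  | zero => simp
  | succ n => simp [coeff_succ_X_mul, pow_succ]

section FormalLog

theorem coeff_zero_plog {K : Type*} [Field K] (F : K⟦X⟧) : coeff 0 (plog F) = 0 := by
  simp [plog]

variable {K : Type*} [Field K] [CharZero K]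

theorem plog_eq_logOf {F : K⟦X⟧} (hF : constantCoeff F = 1) : plog F = logOf F := by
  have hu : constantCoeff (F - 1) = 0 := by simp [hF]
  ext n
  rw [plog, coeff_mk, logOf_eq, coeff_subst' (HasSubst.of_constantCoeff_zero' hu),
    finsum_eq_sum_of_support_subset (s := Finset.Icc 1 n)]
  · refine Finset.sum_congr rfl fun k hk => ?_
    have : k ≠ 0 := by have := (Finset.mem_Icc.mp hk).1; omega
    simp [this, smul_eq_mul]
  · intro k hk
    contrapose! hk
    rcases Nat.eq_zero_or_pos k with rfl | hk0
    · simp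
    · have : n < k := by simp at hk; omega
      simp [coeff_pow_eq_zero_of_lt hu this]

theorem mul_derivative_logOf {F : K⟦X⟧} (hF : constantCoeff F = 1) :
    F * d⁄dX K (logOf F) = d⁄dX K F := by
  have hs : HasSubst (F - 1) := HasSubst.of_constantCoeff_zero' (by simp [hF])
  have hinv : F * (d⁄dX K (log K)).subst (F - 1) = 1 := by
    simpa [← coe_substAlgHom hs, substAlgHom_X] using
      congrArg (substAlgHom hs) (one_add_X_mul_derivative_log K)
  rw [logOf_eq, derivative_subst hs, ← mul_assoc, hinv, one_mul, map_sub, derivative_one,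
    sub_zero]

theorem logOf_mul {F G : K⟦X⟧} (hF : constantCoeff F = 1) (hG : constantCoeff G = 1) :
    logOf (F * G) = logOf F + logOf G := by
  have hFG : constantCoeff (F * G) = 1 := by simp [hF, hG]
  refine derivative.ext (mul_left_cancel₀ (a := F * G) (fun h => by simp [h] at hFG) ?_) ?_
  · rw [mul_derivative_logOf hFG, map_add, Derivation.leibniz, smul_eq_mul, smul_eq_mul]
    linear_combination (-G) * mul_derivative_logOf hF - F * mul_derivative_logOf hG
  · simp [constantCoeff_logOf hFG, constantCoeff_logOf hF, constantCoeff_logOf hG]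

theorem plog_mul {F G : K⟦X⟧} (hF : constantCoeff F = 1) (hG : constantCoeff G = 1) :
    plog (F * G) = plog F + plog G := by
  rw [plog_eq_logOf hF, plog_eq_logOf hG, plog_eq_logOf (by simp [hF, hG]), logOf_mul hF hG]

theorem plog_rescale (c : K) (F : K⟦X⟧) : plog (rescale c F) = rescale c (plog F) := by
  ext n
  have : rescale c F - 1 = rescale c (F - 1) := by rw [map_sub, map_one]
  simp only [plog, coeff_mk, coeff_rescale, this, ← map_pow, Finset.mul_sum]
  exact Finset.sum_congr rfl fun k _ => by ring

theorem plog_one_sub_X : plog (1 - X : K⟦X⟧) = rescale (-1) (log K) := by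
  rw [plog_eq_logOf (by simp), logOf_eq, rescale_eq_subst, neg_one_smul]
  congr 1
  ring

theorem coeff_plog_one_sub_X {n : ℕ} (hn : n ≠ 0) :
    coeff n (plog (1 - X : K⟦X⟧)) = -(n : K)⁻¹ := by
  rw [plog_one_sub_X, coeff_rescale, coeff_log, if_neg hn]
  simp [div_eq_mul_inv, ← mul_assoc, ← pow_add, pow_succ]

theorem coeff_plog_mul_eq_one_of_functional_eq {q : K} {F : K⟦X⟧} (h0 : constantCoeff F = 1)
    (hfe : F = (1 - X) * rescale q F) {n : ℕ} (hn : n ≠ 0) :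
    coeff n (plog F) * (n * (q ^ n - 1)) = 1 := by
  have hrescale : constantCoeff (rescale q F) = 1 := by
    rw [← coeff_zero_eq_constantCoeff_apply, coeff_rescale]
    simp [h0]
  have hrec : coeff n (plog F) = -(n : K)⁻¹ + q ^ n * coeff n (plog F) := by
    conv_lhs => rw [hfe]
    rw [plog_mul (by simp) hrescale, map_add, coeff_plog_one_sub_X hn, plog_rescale,
      coeff_rescale]
  linear_combination (-(n : K)) * hrec + mul_inv_cancel₀ (Nat.cast_ne_zero.mpr hn : (n : K) ≠ 0)

end FormalLog

section ExpLog

variable {K : Type*} [Field K]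

theorem eq_one_add_X_of_one_add_X_mul_derivative_eq [CharZero K] {f : K⟦X⟧}
    (h0 : constantCoeff f = 1) (hf : (1 + X) * d⁄dX K f = f) : f = 1 + X := by
  have hunit : constantCoeff (1 + X : K⟦X⟧) ≠ 0 := by simp
  have hinv := PowerSeries.mul_inv_cancel _ hunit
  have hquot : f * (1 + X)⁻¹ = 1 := by
    refine derivative.ext ?_ (by simp [h0])
    have hd : d⁄dX K (1 + X : K⟦X⟧) = 1 := by simp
    rw [Derivation.leibniz, derivative_inv', hd, smul_eq_mul, smul_eq_mul, derivative_one]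
    linear_combination (1 + X : K⟦X⟧)⁻¹ ^ 2 * hf - (1 + X : K⟦X⟧)⁻¹ * d⁄dX K f * hinv
  calc f = f * (1 + X)⁻¹ * (1 + X) := by
        rw [mul_assoc, PowerSeries.inv_mul_cancel _ hunit, mul_one]
    _ = 1 + X := by rw [hquot, one_mul]

theorem exp_subst_log [Algebra ℚ K] : (exp K).subst (log K) = 1 + X := by
  have : CharZero K := charZero_of_injective_algebraMap (algebraMap ℚ K).injective
  have hlog : d⁄dX K ((exp K).subst (log K)) = (exp K).subst (log K) * d⁄dX K (log K) := by
    rw [derivative_subst HasSubst.log, derivative_exp]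
  refine eq_one_add_X_of_one_add_X_mul_derivative_eq ?_ ?_
  · have h := constantCoeff_subst_eq_zero (S := K) (τ := Unit) constantCoeff_log (exp K - 1)
      (by simp)
    rw [← coe_substAlgHom HasSubst.log, map_sub, map_one, map_sub, map_one, sub_eq_zero] at h
    rwa [← coe_substAlgHom HasSubst.log, constantCoeff_eq]
  · rw [hlog, mul_left_comm, one_add_X_mul_derivative_log, mul_one]

theorem rescale_bernoulliPowerSeries_subst_log_mul [Algebra ℚ K] (ℓ : ℕ) :
    (rescale (ℓ : K) (bernoulliPowerSeries K)).subst (log K) * ((1 + X) ^ ℓ - 1)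
      = (ℓ : K) • log K := by
  have h := congrArg (fun f => substAlgHom (HasSubst.log (A := K)) (rescale (ℓ : K) f))
    (bernoulliPowerSeries_mul_exp_sub_one K)
  simp only [map_mul, map_sub, map_one, rescale_X, ← exp_pow_eq_rescale_exp, map_pow,
    ← smul_eq_C_mul, map_smul, substAlgHom_X, coe_substAlgHom, exp_subst_log] at h
  exact h

end ExpLog

theorem logOnePlusX_eq_log : logOnePlusX = log ℚ := by
  ext n
  simp [logOnePlusX]

theorem coeff_zero_bernSum : coeff 0 bernSum = 0 := by
  ext i
  simp [bernSum, bernTerm, liCoeff]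

theorem coeff_bernSum {ℓ : ℕ} (hℓ : ℓ ≠ 0) :
    coeff ℓ bernSum
      = (((ℓ : ℚ) ^ 2)⁻¹ • rescale (ℓ : ℚ) (bernoulliPowerSeries ℚ)).subst (log ℚ) := by
  have hℓ' : (ℓ : ℚ) ≠ 0 := Nat.cast_ne_zero.mpr hℓ
  ext i
  rw [bernSum, coeff_mk, coeff_mk, coeff_subst' HasSubst.log]
  refine finsum_congr fun k => ?_
  have hli : liCoeff (2 - k) ℓ = ((ℓ : ℚ) ^ 2)⁻¹ * (ℓ : ℚ) ^ k := by
    rw [liCoeff, if_neg hℓ, neg_sub, zpow_sub₀ hℓ', zpow_natCast, zpow_ofNat, inv_mul_eq_div]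
  rw [bernTerm, coeff_mk, map_smul, smul_eq_mul, smul_eq_mul, coeff_smul, coeff_rescale, hli,
    logOnePlusX_eq_log, bernoulliPowerSeries, coeff_mk, Algebra.algebraMap_self, RingHom.id_apply]
  ring

theorem natCast_mul_coeff_bernSum_mul {ℓ : ℕ} (hℓ : ℓ ≠ 0) :
    (ℓ : ℚ⟦X⟧) * coeff ℓ bernSum * ((1 + X) ^ ℓ - 1) = logOnePlusX := by
  have h := rescale_bernoulliPowerSeries_subst_log_mul (K := ℚ) ℓ
  rw [coeff_bernSum hℓ, subst_smul HasSubst.log, mul_assoc, smul_mul_assoc, h, smul_smul,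
    logOnePlusX_eq_log, ← map_natCast (C (R := ℚ)), ← smul_eq_C_mul, smul_smul,
    show (ℓ : ℚ) * (((ℓ : ℚ) ^ 2)⁻¹ * ℓ) = 1 by field_simp, one_smul]

theorem statement1 (F : PowerSeries (LaurentSeries ℚ))
    (h0 : PowerSeries.constantCoeff (R := LaurentSeries ℚ) F = 1)
    (hfe : F = (1 - PowerSeries.X) * PowerSeries.rescale (1 + xL) F) :
    PowerSeries.C (R := LaurentSeries ℚ) ((HahnSeries.ofPowerSeries ℤ ℚ) logOnePlusX) * plog F
      = PowerSeries.map (HahnSeries.ofPowerSeries ℤ ℚ) bernSum := by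
  have : CharZero (LaurentSeries ℚ) :=
    charZero_of_injective_algebraMap (algebraMap ℚ (LaurentSeries ℚ)).injective
  set σ := HahnSeries.ofPowerSeries ℤ ℚ
  ext ℓ : 1
  rw [coeff_C_mul, coeff_map]
  rcases eq_or_ne ℓ 0 with rfl | hℓ
  · rw [coeff_zero_plog, coeff_zero_bernSum, mul_zero, map_zero]
  have hF := coeff_plog_mul_eq_one_of_functional_eq h0 hfe hℓ
  have hB : (ℓ : LaurentSeries ℚ) * σ (coeff ℓ bernSum) * ((1 + xL) ^ ℓ - 1) = σ logOnePlusX := by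
    simpa [σ, xL] using congrArg σ (natCast_mul_coeff_bernSum_mul hℓ)
  linear_combination (-coeff ℓ (plog F)) * hB + σ (coeff ℓ bernSum) * hF
end

section
/- Let A be a nonzero integer. There is a unique power series z(t) ∈ ℚ[[t]] with constant term z(0) = 1 satisfying 1 − z(t) = (−1)^A t · z(t)^A (for negative A the power z(t)^A uses that z(t) is invertible). This solution is given by the hypergeometric series z(t) = ∑_{k≥0} (−1)^{(A+1)k} (1/((A−1)k+1)) · C(Ak,k) · t^k, where C(Ak,k) := Ak(Ak−1)⋯(Ak−k+1)/k! is the generalized binomial coefficient; in particular z(t) ∈ ℤ[[t]]. Moreover log z(t) = ∑_{k≥1} (−1)^{(A+1)k} (1/(Ak)) · C(Ak,k) · t^k. -/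
/-!
For any solution `z` of `1 - z = c t z^A`, the family of powers `m ↦ z^m` (`m ∈ ℤ`) satisfies
`z^(m+1) = z^m - c t z^(m+A)`, and this recurrence together with `z^0 = 1` determines every
coefficient of every power. The series with coefficients `(-c)^n (m/n) C(An+m-1, n-1)` satisfy the
same recurrence (a Pascal-type identity) and, by the same uniqueness, are multiplicative in `m`;
so they are the powers of a solution, which gives existence, uniqueness and the coefficients of
`z` at once. For the logarithm, the binomial expansion `z^m = ∑ C(m,k) (z-1)^k` shows that
`[t^b] z^m` is a polynomial in `m`, and its coefficient of `m` is `[t^b] log z`.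
-/

/-- The formal logarithm `log F = ∑_{k ≥ 1} (-1)^{k+1}(F-1)^k/k`, coefficientwise. -/
noncomputable def plogQ (F : PowerSeries ℚ) : PowerSeries ℚ :=
  PowerSeries.mk fun b => ∑ k ∈ Finset.Icc 1 b,
    ((-1 : ℚ) ^ (k + 1) / k) * PowerSeries.coeff b ((F - 1) ^ k)

/-- The generalized binomial coefficient `C(Ak, k) = Ak(Ak-1)⋯(Ak-k+1)/k!`. -/
noncomputable def genBinom (A : ℤ) (k : ℕ) : ℚ :=
  (∏ i ∈ Finset.range k, ((A * (k : ℤ) - (i : ℤ) : ℤ) : ℚ)) / (k.factorial : ℚ)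

/-- `z` (a unit of `ℚ[[t]]`) has constant term `1` and satisfies
`1 - z = (-1)^A t z^A`. -/
def IsNahmSol (A : ℤ) (z : (PowerSeries ℚ)ˣ) : Prop :=
  PowerSeries.constantCoeff (z : PowerSeries ℚ) = 1 ∧
  1 - (z : PowerSeries ℚ) =
    PowerSeries.C ((-1 : ℚ) ^ A) *
      (PowerSeries.X * ((z ^ A : (PowerSeries ℚ)ˣ) : PowerSeries ℚ))

open PowerSeries Finset
open scoped Nat

lemma descPochhammer_succ_eval_left {S : Type*} [CommRing S] (n : ℕ) (x : S) :
    (descPochhammer S (n + 1)).eval x = x * (descPochhammer S n).eval (x - 1) := by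
  simp [descPochhammer_succ_left]

lemma descPochhammer_succ_coeff_one (R : Type*) [CommRing R] (k : ℕ) :
    (descPochhammer R (k + 1)).coeff 1 = (-1) ^ k * k ! := by
  have h := ascPochhammer_eval_neg_eq_descPochhammer R (-1) k
  rw [neg_neg, ascPochhammer_eval_one] at h
  rw [descPochhammer_succ_left, Polynomial.coeff_X_mul, Polynomial.coeff_zero_eq_eval_zero,
    Polynomial.eval_comp, Polynomial.eval_sub, Polynomial.eval_X, Polynomial.eval_one, zero_sub, h,
    ← mul_assoc, ← mul_pow, neg_one_mul, neg_neg, one_pow, one_mul]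

lemma descPochhammer_eval_intCast_div_factorial (x : ℤ) (k : ℕ) :
    (descPochhammer ℚ k).eval (x : ℚ) / k ! = Ring.choose x k := by
  rw [← descPochhammer_eval_cast, Polynomial.eval_eq_smeval,
    Ring.descPochhammer_eq_factorial_smul_choose, nsmul_eq_mul]
  push_cast
  field_simp

section Recurrence

variable {R : Type*} [Ring R]

def IsNahmFamily (A : ℤ) (c : R) (u : ℤ → R⟦X⟧) : Prop :=
  ∀ m, u (m + 1) = u m - C c * (X * u (m + A))

lemma IsNahmFamily.eq_of_apply_zero_eq {A : ℤ} {c : R} {u v : ℤ → R⟦X⟧}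
    (hu : IsNahmFamily A c u) (hv : IsNahmFamily A c v) (h0 : u 0 = v 0) : u = v := by
  let d (n : ℕ) (m : ℤ) : R := coeff n (u m) - coeff n (v m)
  have hd : ∀ n, Function.Periodic (d n) 1 → ∀ m, d n m = 0 := fun n h m ↦ by
    simpa [d, h0] using h.int_mul_eq m
  suffices ∀ n m, d n m = 0 from funext fun m ↦ ext fun n ↦ sub_eq_zero.1 (this n m)
  intro n
  induction n with
  | zero => exact hd 0 fun m ↦ by simp [d, hu m, hv m]
  | succ n ih =>
    refine hd (n + 1) fun m ↦ ?_
    have := ih (m + A)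
    simp only [d, hu m, hv m, map_sub, coeff_C_mul, coeff_succ_X_mul] at this ⊢
    rw [sub_eq_zero.1 this]
    abel

end Recurrence

-- For `n ≥ 1`, `nahmCoeff A n m = (m / n) * C(A n + m - 1, n - 1)`: up to the sign `(-c)^n`,
-- the coefficient of `t^n` in `z^m`.
noncomputable def nahmCoeff (A : ℤ) : ℕ → ℤ → ℚ
  | 0, _ => 1
  | n + 1, m => m * (descPochhammer ℚ n).eval (A * (n + 1) + m - 1 : ℚ) / (n + 1)!

lemma nahmCoeff_zero_right (A : ℤ) {n : ℕ} (hn : n ≠ 0) : nahmCoeff A n 0 = 0 := by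
  cases n with
  | zero => contradiction
  | succ n => simp [nahmCoeff]

lemma nahmCoeff_succ_add_one (A : ℤ) (n : ℕ) (m : ℤ) :
    nahmCoeff A (n + 1) (m + 1) = nahmCoeff A (n + 1) m + nahmCoeff A n (m + A) := by
  cases n with
  | zero => simp [nahmCoeff]
  | succ n =>
    set N : ℚ := A * (n + 1 + 1) + m - 1
    have hleft : (descPochhammer ℚ (n + 1)).eval (A * (n + 1 + 1) + (m + 1 : ℤ) - 1 : ℚ) =
        (N + 1) * (descPochhammer ℚ n).eval N := by
      rw [show (A * (n + 1 + 1) + (m + 1 : ℤ) - 1 : ℚ) = N + 1 by push_cast; ring,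
        descPochhammer_succ_eval_left, add_sub_cancel_right]
    have hright : (descPochhammer ℚ (n + 1)).eval N = (descPochhammer ℚ n).eval N * (N - n) :=
      descPochhammer_succ_eval n N
    have hshift : (A * (n + 1) + (m + A : ℤ) - 1 : ℚ) = N := by push_cast; ring
    simp only [nahmCoeff, Nat.cast_add, Nat.cast_one]
    rw [hleft, hright, hshift, Nat.factorial_succ (n + 1)]
    push_cast
    field_simp
    ring

lemma isNahmFamily_zpow {R : Type*} [CommRing R] {A : ℤ} {c : R} {z : R⟦X⟧ˣ}
    (hz : 1 - (z : R⟦X⟧) = C c * (X * (↑(z ^ A) : R⟦X⟧))) :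
    IsNahmFamily A c fun m ↦ (↑(z ^ m) : R⟦X⟧) := fun m ↦ by
  have hz' : (z : R⟦X⟧) = 1 - C c * (X * (↑(z ^ A) : R⟦X⟧)) := by
    rw [← hz, sub_sub_cancel]
  dsimp only
  rw [zpow_add_one, zpow_add, Units.val_mul, Units.val_mul, hz']
  ring

section NahmSeries

variable (A : ℤ) (c : ℚ)

noncomputable def nahmSeries (m : ℤ) : ℚ⟦X⟧ := mk fun n ↦ (-c) ^ n * nahmCoeff A n m

lemma nahmSeries_zero : nahmSeries A c 0 = 1 := by
  ext (_ | n)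
  · simp [nahmSeries, nahmCoeff]
  · simp [nahmSeries, nahmCoeff_zero_right, coeff_one]

lemma isNahmFamily_nahmSeries : IsNahmFamily A c (nahmSeries A c) := fun m ↦ by
  ext (_ | n)
  · simp [nahmSeries, nahmCoeff]
  · simp only [nahmSeries, map_sub, coeff_mk, coeff_C_mul, coeff_succ_X_mul,
      nahmCoeff_succ_add_one]
    ring

lemma nahmSeries_add (m m' : ℤ) :
    nahmSeries A c (m + m') = nahmSeries A c m * nahmSeries A c m' := by
  have hu : IsNahmFamily A c fun m ↦ nahmSeries A c (m + m') := fun m ↦ by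
    simpa only [add_right_comm] using isNahmFamily_nahmSeries A c (m + m')
  have hv : IsNahmFamily A c fun m ↦ nahmSeries A c m * nahmSeries A c m' := fun m ↦ by
    simp only [isNahmFamily_nahmSeries A c m]
    ring
  exact congrFun (hu.eq_of_apply_zero_eq hv (by simp [nahmSeries_zero])) m

noncomputable def nahmUnit : ℚ⟦X⟧ˣ where
  val := nahmSeries A c 1
  inv := nahmSeries A c (-1)
  val_inv := by rw [← nahmSeries_add, add_neg_cancel, nahmSeries_zero]
  inv_val := by rw [← nahmSeries_add, neg_add_cancel, nahmSeries_zero]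

lemma val_nahmUnit_zpow (m : ℤ) : (↑(nahmUnit A c ^ m) : ℚ⟦X⟧) = nahmSeries A c m := by
  induction m using Int.induction_on with
  | zero => rw [zpow_zero, Units.val_one, nahmSeries_zero]
  | succ m ih => rw [zpow_add_one, Units.val_mul, ih, nahmSeries_add]; rfl
  | pred m ih => rw [zpow_sub_one, Units.val_mul, ih, sub_eq_add_neg, nahmSeries_add]; rfl

lemma nahmUnit_spec :
    1 - (nahmUnit A c : ℚ⟦X⟧) = C c * (X * (↑(nahmUnit A c ^ A) : ℚ⟦X⟧)) := by
  have h := isNahmFamily_nahmSeries A c 0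
  rw [zero_add, zero_add, nahmSeries_zero] at h
  rw [val_nahmUnit_zpow, show (nahmUnit A c : ℚ⟦X⟧) = nahmSeries A c 1 from rfl, h]
  ring

variable {A c}

lemma val_zpow_eq_nahmSeries {z : ℚ⟦X⟧ˣ}
    (hz : 1 - (z : ℚ⟦X⟧) = C c * (X * (↑(z ^ A) : ℚ⟦X⟧))) (m : ℤ) :
    (↑(z ^ m) : ℚ⟦X⟧) = nahmSeries A c m :=
  congrFun ((isNahmFamily_zpow hz).eq_of_apply_zero_eq (isNahmFamily_nahmSeries A c)
    (by simp [nahmSeries_zero])) m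

lemma eq_nahmUnit {z : ℚ⟦X⟧ˣ}
    (hz : 1 - (z : ℚ⟦X⟧) = C c * (X * (↑(z ^ A) : ℚ⟦X⟧))) : z = nahmUnit A c :=
  Units.ext <| (zpow_one z ▸ val_zpow_eq_nahmSeries hz 1 :)

lemma coeff_sub_one_pow {z : ℚ⟦X⟧ˣ}
    (hz : 1 - (z : ℚ⟦X⟧) = C c * (X * (↑(z ^ A) : ℚ⟦X⟧))) (k b : ℕ) :
    coeff b (((z : ℚ⟦X⟧) - 1) ^ k) =
      if k ≤ b then (-c) ^ b * nahmCoeff A (b - k) (A * k) else 0 := by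
  have hpow : ((z : ℚ⟦X⟧) - 1) ^ k = C ((-c) ^ k) * (X ^ k * nahmSeries A c (A * k)) := by
    rw [← val_zpow_eq_nahmSeries hz, zpow_mul, zpow_natCast, Units.val_pow_eq_pow_val,
      ← neg_sub, hz, map_pow, map_neg]
    ring
  rw [hpow, coeff_C_mul, coeff_X_pow_mul']
  split_ifs with hk
  · rw [nahmSeries, coeff_mk, ← mul_assoc, ← pow_add, Nat.add_sub_cancel' hk]
  · rw [mul_zero]

end NahmSeries

lemma genBinom_eq (A : ℤ) (k : ℕ) :
    genBinom A k = (descPochhammer ℚ k).eval (A * k : ℚ) / k ! := by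
  rw [genBinom, descPochhammer_eval_eq_prod_range]
  push_cast
  rfl

lemma nahmCoeff_one_right {A : ℤ} (hA : A ≠ 0) (k : ℕ) :
    nahmCoeff A k 1 = (((A - 1) * k + 1 : ℤ) : ℚ)⁻¹ * genBinom A k := by
  cases k with
  | zero => simp [nahmCoeff, genBinom]
  | succ n =>
    have hne : (A - 1) * (n + 1) + 1 ≠ (0 : ℤ) := by
      rcases hA.lt_or_gt with h | h <;> nlinarith
    have hne' : ((A - 1) * (n + 1) + 1 : ℚ) ≠ 0 := by exact_mod_cast hne
    rw [genBinom_eq, nahmCoeff, descPochhammer_succ_eval]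
    push_cast
    rw [show (A * (n + 1) - n : ℚ) = (A - 1) * (n + 1) + 1 by ring, add_sub_cancel_right,
      eq_comm, inv_mul_eq_iff_eq_mul₀ hne']
    ring

lemma exists_nahmCoeff_one_right_eq_intCast (A : ℤ) (k : ℕ) :
    ∃ a : ℤ, nahmCoeff A k 1 = a := by
  cases k with
  | zero => exact ⟨1, rfl⟩
  | succ n =>
    refine ⟨Ring.choose (A * (n + 1)) (n + 1) - (A - 1) * Ring.choose (A * (n + 1)) n, ?_⟩
    have h := descPochhammer_eval_intCast_div_factorial (A * (n + 1))
    push_cast at h ⊢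
    rw [← h, ← h, nahmCoeff, descPochhammer_succ_eval, Nat.factorial_succ]
    push_cast
    rw [add_sub_cancel_right]
    field_simp
    ring

lemma sum_choose_mul_nahmCoeff (A : ℤ) (b m : ℕ) :
    ∑ k ∈ range (b + 1), (m.choose k : ℚ) * nahmCoeff A (b - k) (A * k) =
      nahmCoeff A b m := by
  -- expand `z ^ m = ((z - 1) + 1) ^ m` for the solution with `c = -1`, whose signs `(-c)^n` are `1`
  have hz := nahmUnit_spec A (-1)
  have hbin := congrArg (coeff b) (add_pow ((nahmUnit A (-1) : ℚ⟦X⟧) - 1) 1 m)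
  rw [sub_add_cancel, ← Units.val_pow_eq_pow_val, ← zpow_natCast, val_zpow_eq_nahmSeries hz,
    nahmSeries, coeff_mk, map_sum] at hbin
  simp only [one_pow, mul_one, ← map_natCast (C : ℚ →+* ℚ⟦X⟧), coeff_mul_C,
    coeff_sub_one_pow hz, neg_neg, one_mul] at hbin
  rw [hbin, sum_subset (range_subset_range.2 (by omega : m + 1 ≤ m + b + 1)),
    ← sum_subset (range_subset_range.2 (by omega : b + 1 ≤ m + b + 1))]
  · refine sum_congr rfl fun k hk ↦ ?_
    rw [if_pos (mem_range_succ_iff.1 hk), mul_comm]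
  · intro k _ hk
    rw [if_neg (by simpa using hk), zero_mul]
  · intro k _ hk
    rw [Nat.choose_eq_zero_of_lt (by simpa using hk), Nat.cast_zero, mul_zero]

lemma sum_Icc_neg_one_pow_div_mul_nahmCoeff (A : ℤ) (n : ℕ) :
    ∑ k ∈ Icc 1 (n + 1), (-1 : ℚ) ^ (k + 1) / k * nahmCoeff A (n + 1 - k) (A * k) =
      (descPochhammer ℚ n).eval (A * (n + 1) - 1 : ℚ) / (n + 1)! := by
  let F : Polynomial ℚ := ∑ k ∈ range (n + 1 + 1),
    Polynomial.C (nahmCoeff A (n + 1 - k) (A * k) / k !) * descPochhammer ℚ k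
  let G : Polynomial ℚ := Polynomial.C ((n + 1)! : ℚ)⁻¹ * (Polynomial.X *
    (descPochhammer ℚ n).comp (Polynomial.X + Polynomial.C (A * (n + 1) - 1 : ℚ)))
  -- both sides of `sum_choose_mul_nahmCoeff` are polynomials in `m`: compare their coefficients
  -- of `m`
  have hFG : F = G := by
    refine Polynomial.eq_of_infinite_eval_eq _ _
      (Set.infinite_of_injective_forall_mem Nat.cast_injective fun m : ℕ ↦ ?_)
    show F.eval (m : ℚ) = G.eval (m : ℚ)
    trans nahmCoeff A (n + 1) m
    · rw [← sum_choose_mul_nahmCoeff, Polynomial.eval_finsetSum]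
      refine sum_congr rfl fun k _ ↦ ?_
      rw [Polynomial.eval_mul, Polynomial.eval_C, Nat.cast_choose_eq_descPochhammer_div]
      ring
    · simp only [G, nahmCoeff, Polynomial.eval_mul, Polynomial.eval_C, Polynomial.eval_X,
        Polynomial.eval_comp, Polynomial.eval_add]
      push_cast
      ring_nf
  have hcoeff := congrArg (Polynomial.coeff · 1) hFG
  simp only [F, G, Polynomial.finsetSum_coeff, Polynomial.coeff_C_mul] at hcoeff
  rw [sum_range_eq_add_Ico _ (by omega), Ico_add_one_right_eq_Icc, descPochhammer_zero,
    Polynomial.coeff_one, if_neg one_ne_zero, mul_zero, zero_add, Polynomial.coeff_X_mul,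
    Polynomial.coeff_zero_eq_eval_zero, Polynomial.eval_comp] at hcoeff
  simp only [Polynomial.eval_add, Polynomial.eval_X, Polynomial.eval_C, zero_add] at hcoeff
  rw [div_eq_inv_mul, ← hcoeff]
  refine sum_congr rfl fun k hk ↦ ?_
  obtain ⟨j, rfl⟩ : ∃ j, k = j + 1 := ⟨k - 1, by grind⟩
  rw [descPochhammer_succ_coeff_one, Nat.factorial_succ]
  push_cast
  field_simp
  ring

lemma coeff_plogQ {A : ℤ} (hA : A ≠ 0) {c : ℚ} {z : ℚ⟦X⟧ˣ}
    (hz : 1 - (z : ℚ⟦X⟧) = C c * (X * (↑(z ^ A) : ℚ⟦X⟧))) (b : ℕ) :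
    coeff b (plogQ z) =
      if b = 0 then 0 else (-c) ^ b * ((A * b : ℤ) : ℚ)⁻¹ * genBinom A b := by
  cases b with
  | zero => simp [plogQ]
  | succ n =>
    have hAn : (A * (n + 1) : ℚ) ≠ 0 :=
      mul_ne_zero (by exact_mod_cast hA) n.cast_add_one_ne_zero
    rw [plogQ, coeff_mk, if_neg n.succ_ne_zero, sum_congr rfl fun k hk ↦ by
      rw [coeff_sub_one_pow hz, if_pos (mem_Icc.1 hk).2, mul_left_comm], ← mul_sum,
      sum_Icc_neg_one_pow_div_mul_nahmCoeff, genBinom_eq, descPochhammer_succ_eval_left]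
    push_cast
    field_simp

lemma neg_neg_one_zpow_pow (A : ℤ) (k : ℕ) : (-(-1 : ℚ) ^ A) ^ k = (-1) ^ ((A + 1) * k) := by
  rw [zpow_mul, zpow_natCast, zpow_add_one₀ (by norm_num), mul_neg_one]

lemma exists_neg_neg_one_zpow_eq_intCast (A : ℤ) : ∃ s : ℤ, -(-1 : ℚ) ^ A = s := by
  rcases A.even_or_odd with h | h
  · exact ⟨-1, by rw [h.neg_one_zpow]; norm_num⟩
  · exact ⟨1, by rw [h.neg_one_zpow]; norm_num⟩

theorem statement4 (A : ℤ) (hA : A ≠ 0) :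
    (∃! z : (PowerSeries ℚ)ˣ, IsNahmSol A z) ∧
    ∀ z : (PowerSeries ℚ)ˣ, IsNahmSol A z →
      ((z : PowerSeries ℚ) = PowerSeries.mk (fun k =>
          (-1 : ℚ) ^ ((A + 1) * (k : ℤ)) * (((A - 1) * (k : ℤ) + 1 : ℤ) : ℚ)⁻¹ *
            genBinom A k)) ∧
      (∀ k : ℕ, ∃ c : ℤ, PowerSeries.coeff k (z : PowerSeries ℚ) = c) ∧
      plogQ (z : PowerSeries ℚ) = PowerSeries.mk (fun k =>
          if k = 0 then 0
          else (-1 : ℚ) ^ ((A + 1) * (k : ℤ)) * ((A * (k : ℤ) : ℤ) : ℚ)⁻¹ *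
            genBinom A k) := by
  have hsign := neg_neg_one_zpow_pow A
  have hconst : constantCoeff (nahmUnit A ((-1) ^ A) : ℚ⟦X⟧) = 1 := by
    simp [nahmUnit, nahmSeries, ← coeff_zero_eq_constantCoeff_apply, nahmCoeff]
  refine ⟨⟨nahmUnit A _, ⟨hconst, nahmUnit_spec A _⟩, fun z hz ↦ eq_nahmUnit hz.2⟩,
    fun z hz ↦ ?_⟩
  have hcoeff (k : ℕ) : coeff k (z : ℚ⟦X⟧) = (-(-1) ^ A) ^ k * nahmCoeff A k 1 := by
    rw [← zpow_one z, val_zpow_eq_nahmSeries hz.2, nahmSeries, coeff_mk]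
  refine ⟨ext fun k ↦ ?_, fun k ↦ ?_, ext fun b ↦ ?_⟩
  · rw [hcoeff, coeff_mk, hsign, nahmCoeff_one_right hA, mul_assoc]
  · obtain ⟨a, ha⟩ := exists_nahmCoeff_one_right_eq_intCast A k
    obtain ⟨s, hs⟩ := exists_neg_neg_one_zpow_eq_intCast A
    exact ⟨s ^ k * a, by rw [hcoeff, ha, hs]; push_cast; ring⟩
  · rw [coeff_plogQ hA hz.2, coeff_mk, hsign]
end

section
/- Let N ≥ 1 and let A be a symmetric N×N matrix with integer entries. There is a unique N-tuple z(t) = (z_1(t),…,z_N(t)) of power series in ℚ[[t_1,…,t_N]] with z_j(0) = 1 for all j (hence each z_j invertible) satisfying the t-deformed Nahm equations 1 − z_j(t) = (−1)^{A_{jj}} t_j ∏_{i=1}^{N} z_i(t)^{A_{ij}} for j = 1,…,N. Moreover each z_j(t) has integer coefficients: z_j(t) ∈ ℤ[[t_1,…,t_N]]. -/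
/-!
Write `Φ(z)_j = 1 - c_j t_j ∏_i z_i^{A_ij}`, so that the deformed Nahm equations say `Φ(z) = z`.
If two tuples of units agree up to total degree `n`, so do the products `∏_i z_i^{A_ij}`
(congruence modulo an ideal is preserved by products and inverses of units), and the factor
`t_j` then makes `Φ(z)` and `Φ(w)` agree up to degree `n + 1`. Such a contracting map has at most
one fixed point, and the iterates `Φ^[m] 1` converge coefficientwise to one. As
`c_j = (-1)^{A_jj}` is an integer, the same argument in `ℤ[[t]]` gives an integral solution; its
image in `ℚ[[t]]` is a solution, hence by uniqueness the solution.
-/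

/-- The `z_j` are taken as units, which they are since their constant terms are `1`, so that
the integer powers `z_i^{A_ij}` make sense. -/
def IsNahmSolMV {N : ℕ} (A : Matrix (Fin N) (Fin N) ℤ)
    (z : Fin N → (MvPowerSeries (Fin N) ℚ)ˣ) : Prop :=
  ∀ j : Fin N,
    MvPowerSeries.constantCoeff (σ := Fin N) (R := ℚ) (z j : MvPowerSeries (Fin N) ℚ) = 1 ∧
    1 - (z j : MvPowerSeries (Fin N) ℚ) =
      MvPowerSeries.C (σ := Fin N) (R := ℚ) ((-1 : ℚ) ^ (A j j)) *
        (MvPowerSeries.X j *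
          ((∏ i, z i ^ (A i j) : (MvPowerSeries (Fin N) ℚ)ˣ) : MvPowerSeries (Fin N) ℚ))

theorem Ideal.prod_zpow_sub_prod_zpow_mem {S ι : Type*} [CommRing S] {I : Ideal S}
    {u v : ι → Sˣ} (h : ∀ i, (u i : S) - v i ∈ I) (k : ι → ℤ) (s : Finset ι) :
    ((∏ i ∈ s, u i ^ k i : Sˣ) : S) - (∏ i ∈ s, v i ^ k i : Sˣ) ∈ I := by
  let π : Sˣ →* (S ⧸ I)ˣ := Units.map (Ideal.Quotient.mk I).toMonoidHom
  have hπ : ∀ i, π (u i) = π (v i) := fun i => Units.ext (Ideal.Quotient.eq.mpr (h i))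
  rw [← Ideal.Quotient.eq]
  change ((π (∏ i ∈ s, u i ^ k i) : (S ⧸ I)ˣ) : S ⧸ I) = π (∏ i ∈ s, v i ^ k i)
  simp only [map_prod, map_zpow, hπ]

namespace MvPowerSeries

open Function

variable {σ R : Type*} [CommRing R]

variable (σ R) in
def orderIdeal (n : ℕ) : Ideal (MvPowerSeries σ R) where
  carrier := {f | (n : ℕ∞) ≤ f.order}
  zero_mem' := by simp
  add_mem' ha hb := (le_min ha hb).trans min_order_le_add
  smul_mem' _ _ hf := hf.trans (le_add_self.trans le_order_mul)

theorem mem_orderIdeal {n : ℕ} {f : MvPowerSeries σ R} :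
    f ∈ orderIdeal σ R n ↔ (n : ℕ∞) ≤ f.order := Iff.rfl

theorem mem_orderIdeal_zero (f : MvPowerSeries σ R) : f ∈ orderIdeal σ R 0 := by
  simp [mem_orderIdeal]

theorem orderIdeal_antitone : Antitone (orderIdeal σ R) :=
  fun _ _ hmn _ hf => (Nat.cast_le.mpr hmn).trans (mem_orderIdeal.mp hf)

theorem X_mul_mem_orderIdeal_succ {n : ℕ} {f : MvPowerSeries σ R} (i : σ)
    (hf : f ∈ orderIdeal σ R n) : X i * f ∈ orderIdeal σ R (n + 1) := by
  have hX : 1 ≤ (X i : MvPowerSeries σ R).order :=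
    one_le_order_iff_constCoeff_eq_zero.mpr (constantCoeff_X i)
  rw [mem_orderIdeal, Nat.cast_succ, add_comm]
  exact (add_le_add hX hf).trans le_order_mul

theorem coeff_eq_of_sub_mem_orderIdeal {n : ℕ} {f g : MvPowerSeries σ R}
    (h : f - g ∈ orderIdeal σ R n) {d : σ →₀ ℕ} (hd : d.degree < n) : coeff d f = coeff d g :=
  sub_eq_zero.mp (by simpa using coeff_of_lt_order ((Nat.cast_lt.mpr hd).trans_le h))

theorem eq_of_forall_sub_mem_orderIdeal {f g : MvPowerSeries σ R}
    (h : ∀ n, f - g ∈ orderIdeal σ R n) : f = g :=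
  sub_eq_zero.mp (order_eq_top_iff.mp (ENat.eq_top_iff_forall_ge.mpr h))

theorem isUnit_of_sub_mem_orderIdeal_one {f u : MvPowerSeries σ R} (hu : IsUnit u)
    (h : f - u ∈ orderIdeal σ R 1) : IsUnit f := by
  have hc : constantCoeff (f - u) = 0 :=
    one_le_order_iff_constCoeff_eq_zero.mp (by exact_mod_cast h)
  rw [map_sub, sub_eq_zero] at hc
  exact isUnit_iff_constantCoeff.mpr (hc ▸ hu.map constantCoeff)

/-- The `d`-th coefficient is read off a term that, for a sequence as in
`limit_sub_mem_orderIdeal`, is already correct up to degree `degree d`. -/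
noncomputable def limit (f : ℕ → MvPowerSeries σ R) : MvPowerSeries σ R :=
  fun d => coeff d (f (d.degree + 1))

theorem coeff_limit (f : ℕ → MvPowerSeries σ R) (d : σ →₀ ℕ) :
    coeff d (limit f) = coeff d (f (d.degree + 1)) := rfl

theorem limit_sub_mem_orderIdeal {f : ℕ → MvPowerSeries σ R}
    (hf : ∀ m k, m ≤ k → f k - f m ∈ orderIdeal σ R m) (m : ℕ) :
    limit f - f m ∈ orderIdeal σ R m := by
  refine nat_le_order fun d hd => ?_
  rw [map_sub, sub_eq_zero, coeff_limit]
  exact (coeff_eq_of_sub_mem_orderIdeal (hf _ _ (Nat.cast_lt.mp hd)) d.degree.lt_succ_self).symm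

variable {ι : Type*}

def OrderContracting (Φ : (ι → (MvPowerSeries σ R)ˣ) → ι → (MvPowerSeries σ R)ˣ) : Prop :=
  ∀ n z w, (∀ i, (z i : MvPowerSeries σ R) - w i ∈ orderIdeal σ R n) →
    ∀ i, (Φ z i : MvPowerSeries σ R) - Φ w i ∈ orderIdeal σ R (n + 1)

namespace OrderContracting

variable {Φ : (ι → (MvPowerSeries σ R)ˣ) → ι → (MvPowerSeries σ R)ˣ} (hΦ : OrderContracting Φ)
include hΦ

theorem iterate_sub_iterate_mem (m : ℕ) (z w : ι → (MvPowerSeries σ R)ˣ) (i : ι) :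
    (Φ^[m] z i : MvPowerSeries σ R) - Φ^[m] w i ∈ orderIdeal σ R m := by
  induction m generalizing z w i with
  | zero => exact mem_orderIdeal_zero _
  | succ m ih =>
    rw [iterate_succ_apply', iterate_succ_apply']
    exact hΦ m _ _ (ih z w) i

theorem eq_of_isFixedPt {z w : ι → (MvPowerSeries σ R)ˣ} (hz : IsFixedPt Φ z)
    (hw : IsFixedPt Φ w) : z = w := by
  funext i
  refine Units.ext (eq_of_forall_sub_mem_orderIdeal fun n => ?_)
  rw [← (hz.iterate n).eq, ← (hw.iterate n).eq]
  exact hΦ.iterate_sub_iterate_mem n z w i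

theorem exists_isFixedPt : ∃ z, IsFixedPt Φ z := by
  set iter : ℕ → ι → (MvPowerSeries σ R)ˣ := fun m => Φ^[m] 1
  have hcauchy (i : ι) (m k : ℕ) (hmk : m ≤ k) :
      (iter k i : MvPowerSeries σ R) - iter m i ∈ orderIdeal σ R m := by
    obtain ⟨l, rfl⟩ := Nat.exists_eq_add_of_le hmk
    simp only [iter, iterate_add_apply]
    exact hΦ.iterate_sub_iterate_mem m _ _ i
  have hlim (i : ι) (m : ℕ) :=
    limit_sub_mem_orderIdeal (f := fun m => (iter m i : MvPowerSeries σ R)) (hcauchy i) m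
  let z i : (MvPowerSeries σ R)ˣ :=
    (isUnit_of_sub_mem_orderIdeal_one (iter 1 i).isUnit (hlim i 1)).unit
  refine ⟨z, funext fun i => Units.ext (eq_of_forall_sub_mem_orderIdeal fun n => ?_)⟩
  refine orderIdeal_antitone n.le_succ ?_
  have hstep : (Φ z i : MvPowerSeries σ R) - iter (n + 1) i ∈ orderIdeal σ R (n + 1) := by
    rw [show iter (n + 1) = Φ (iter n) from iterate_succ_apply' Φ n 1]
    exact hΦ n _ _ (hlim · n) i
  have hz : (z i : MvPowerSeries σ R) = limit fun m => (iter m i : MvPowerSeries σ R) :=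
    IsUnit.unit_spec _
  simpa [hz] using add_mem hstep (neg_mem (hlim i (n + 1)))

end OrderContracting

theorem isUnit_one_sub {f : MvPowerSeries σ R} (hf : constantCoeff f = 0) : IsUnit (1 - f) :=
  isUnit_iff_constantCoeff.mpr (by simp [hf])

section Nahm

variable [Fintype σ] (A : Matrix σ σ ℤ)

noncomputable def nahmMap (c : σ → R) (z : σ → (MvPowerSeries σ R)ˣ) (j : σ) :
    (MvPowerSeries σ R)ˣ :=
  (isUnit_one_sub (f := C (c j) *
    (X j * ((∏ i, z i ^ A i j : (MvPowerSeries σ R)ˣ) : MvPowerSeries σ R))) (by simp)).unit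

theorem coe_nahmMap (c : σ → R) (z : σ → (MvPowerSeries σ R)ˣ) (j : σ) :
    (nahmMap A c z j : MvPowerSeries σ R) =
      1 - C (c j) * (X j * ((∏ i, z i ^ A i j : (MvPowerSeries σ R)ˣ) : MvPowerSeries σ R)) :=
  IsUnit.unit_spec _

theorem isFixedPt_nahmMap_iff (c : σ → R) (z : σ → (MvPowerSeries σ R)ˣ) :
    IsFixedPt (nahmMap A c) z ↔
      ∀ j, 1 - (z j : MvPowerSeries σ R) =
        C (c j) * (X j * ((∏ i, z i ^ A i j : (MvPowerSeries σ R)ˣ) : MvPowerSeries σ R)) := by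
  simp only [IsFixedPt, funext_iff, Units.ext_iff, coe_nahmMap]
  exact forall_congr' fun j => by constructor <;> intro h <;> rw [← h] <;> ring

theorem nahmMap_orderContracting (c : σ → R) : OrderContracting (nahmMap A c) := by
  intro n z w hzw j
  have key : (nahmMap A c z j : MvPowerSeries σ R) - (nahmMap A c w j : MvPowerSeries σ R) =
      C (c j) * (X j * (((∏ i, w i ^ A i j : (MvPowerSeries σ R)ˣ) : MvPowerSeries σ R) -
        ((∏ i, z i ^ A i j : (MvPowerSeries σ R)ˣ) : MvPowerSeries σ R))) := by
    rw [coe_nahmMap, coe_nahmMap]; ring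
  rw [key]
  refine Ideal.mul_mem_left _ _ (X_mul_mem_orderIdeal_succ j ?_)
  exact Ideal.prod_zpow_sub_prod_zpow_mem (fun i => by simpa using neg_mem (hzw i)) _ _

theorem map_nahmMap {S : Type*} [CommRing S] (φ : R →+* S) (c : σ → R)
    (z : σ → (MvPowerSeries σ R)ˣ) (j : σ) :
    Units.map (map φ).toMonoidHom (nahmMap A c z j) =
      nahmMap A (φ ∘ c) (fun i => Units.map (map φ).toMonoidHom (z i)) j := by
  ext1
  simp only [Units.coe_map, RingHom.toMonoidHom_eq_coe, MonoidHom.coe_coe, coe_nahmMap, map_sub,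
    map_one, map_mul, map_C, map_X, comp_apply]
  simp only [← MonoidHom.coe_coe (map φ), ← RingHom.toMonoidHom_eq_coe, ← Units.coe_map,
    map_prod, map_zpow]

theorem _root_.Function.IsFixedPt.map_nahmMap {S : Type*} [CommRing S] (φ : R →+* S) {c : σ → R}
    {z : σ → (MvPowerSeries σ R)ˣ} (hz : IsFixedPt (nahmMap A c) z) :
    IsFixedPt (nahmMap A (φ ∘ c)) (fun i => Units.map (map φ).toMonoidHom (z i)) :=
  funext fun j => by rw [← MvPowerSeries.map_nahmMap, hz.eq]

end Nahm

end MvPowerSeries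

open MvPowerSeries Function in
theorem isNahmSolMV_iff {N : ℕ} (A : Matrix (Fin N) (Fin N) ℤ)
    (z : Fin N → (MvPowerSeries (Fin N) ℚ)ˣ) :
    IsNahmSolMV A z ↔ IsFixedPt (nahmMap A fun j => (-1 : ℚ) ^ A j j) z := by
  rw [isFixedPt_nahmMap_iff]
  refine forall_congr' fun j => and_iff_right_of_imp fun h => ?_
  have h0 := congrArg constantCoeff h
  rw [map_sub, map_one, map_mul, map_mul, constantCoeff_X, zero_mul, mul_zero, sub_eq_zero] at h0
  exact h0.symm

theorem statement5_general (N : ℕ) (A : Matrix (Fin N) (Fin N) ℤ) :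
    (∃! z : Fin N → (MvPowerSeries (Fin N) ℚ)ˣ, IsNahmSolMV A z) ∧
    ∀ z : Fin N → (MvPowerSeries (Fin N) ℚ)ˣ, IsNahmSolMV A z →
      ∀ (j : Fin N) (d : Fin N →₀ ℕ),
        ∃ c : ℤ, MvPowerSeries.coeff (R := ℚ) d (z j : MvPowerSeries (Fin N) ℚ) = c := by
  have hΦ := MvPowerSeries.nahmMap_orderContracting A fun j => (-1 : ℚ) ^ A j j
  obtain ⟨zℤ, hzℤ⟩ :=
    (MvPowerSeries.nahmMap_orderContracting A fun j => ((A j j).negOnePow : ℤ)).exists_isFixedPt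
  set zℚ := fun i => Units.map (MvPowerSeries.map (Int.castRingHom ℚ)).toMonoidHom (zℤ i)
  have hzℚ : IsNahmSolMV A zℚ := by
    rw [isNahmSolMV_iff]
    simpa only [Function.comp_def, eq_intCast, Int.cast_negOnePow] using
      hzℤ.map_nahmMap A (Int.castRingHom ℚ)
  have huniq {z : Fin N → (MvPowerSeries (Fin N) ℚ)ˣ} (hz : IsNahmSolMV A z) : z = zℚ :=
    hΦ.eq_of_isFixedPt ((isNahmSolMV_iff A z).mp hz) ((isNahmSolMV_iff A zℚ).mp hzℚ)
  refine ⟨⟨zℚ, hzℚ, fun _ => huniq⟩, fun z hz j d => ⟨MvPowerSeries.coeff d (zℤ j : _), ?_⟩⟩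
  simp [huniq hz, zℚ]

theorem statement5 (N : ℕ) (A : Matrix (Fin N) (Fin N) ℤ) (hA : A.IsSymm) :
    (∃! z : Fin N → (MvPowerSeries (Fin N) ℚ)ˣ, IsNahmSolMV A z) ∧
    ∀ z : Fin N → (MvPowerSeries (Fin N) ℚ)ˣ, IsNahmSolMV A z →
      ∀ (j : Fin N) (d : Fin N →₀ ℕ),
        ∃ c : ℤ, MvPowerSeries.coeff (R := ℚ) d (z j : MvPowerSeries (Fin N) ℚ) = c :=
  statement5_general N A
end

section
/- Let A be an integer and F_A(t,q) := ∑_{k≥0} (−1)^{Ak} q^{Ak(k+1)/2} t^k/(q;q)_k ∈ ℚ(q)[[t]] the one-variable Nahm sum. Then the ratio G(t,q) := F_A(qt,q)/F_A(t,q) has all coefficients in ℤ[q,q^{−1}], i.e. G(t,q) ∈ ℤ[q^{±1}][[t]], and it satisfies the Riccati equation 1 − G(t,q) = (−1)^A q^A t ∏_{j=0}^{A−1} G(q^j t, q), where for A ≤ 0 the product ∏_{j=0}^{A−1} denotes ∏_{j=A}^{−1} G(q^j t, q)^{−1} (an empty product if A = 0, using that G is invertible since G(0,q)=1). -/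
/-!
Write `F = F_A` and `c = (-1)^A q^A`. The coefficient recursion
`(1 - q^{k+1}) a_{k+1} = c q^{Ak} a_k` of the Nahm sum is the `q`-difference equation
`F(t) - F(qt) = c t F(q^A t)`. Dividing it by `F(t)` and telescoping
`F(q^A t)/F(t) = ∏_{j<A} F(q^{j+1} t)/F(q^j t)` gives the Riccati equation.

In turn, the Riccati equation computes the coefficient of `t^{n+1}` of `G` from `G mod t^{n+1}`
using only products, substitutions `t ↦ q^j t` and inverses of series with constant term `1`,
all of which preserve `ℤ[q^{±1}]`-integrality; so integrality follows by induction on `n`.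
-/

/-- `(q;q)_k = ∏_{j=1}^k (1 - q^j)` in `ℚ(q)`. -/
noncomputable def qPochR (k : ℕ) : RatFunc ℚ :=
  ∏ j ∈ Finset.Icc 1 k, (1 - RatFunc.X ^ j)

/-- The one-variable Nahm sum
`F_A(t,q) = ∑_{k ≥ 0} (-1)^{Ak} q^{Ak(k+1)/2} t^k/(q;q)_k ∈ ℚ(q)[[t]]`
(the exponent `Ak(k+1)/2` is an integer, so integer division is exact). -/
noncomputable def nahmF1 (A : ℤ) : PowerSeries (RatFunc ℚ) :=
  PowerSeries.mk fun k =>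
    (-1 : RatFunc ℚ) ^ (A * (k : ℤ)) *
      RatFunc.X ^ ((A * (k : ℤ) * ((k : ℤ) + 1)) / 2) / qPochR k

/-- The substitution `t ↦ q^c t` on `ℚ(q)[[t]]`. -/
noncomputable def rsq (c : ℤ) (f : PowerSeries (RatFunc ℚ)) : PowerSeries (RatFunc ℚ) :=
  PowerSeries.rescale (RatFunc.X ^ c) f

/-- `G(t,q) = F_A(qt,q)/F_A(t,q)`. -/
noncomputable def ratioG (A : ℤ) : PowerSeries (RatFunc ℚ) :=
  rsq 1 (nahmF1 A) * (nahmF1 A)⁻¹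

/-- `∏_{j=0}^{A-1} G(q^j t, q)`, where for `A ≤ 0` this denotes
`∏_{j=A}^{-1} G(q^j t, q)⁻¹` (an empty product for `A = 0`). -/
noncomputable def riccatiProd (A : ℤ) (G : PowerSeries (RatFunc ℚ)) :
    PowerSeries (RatFunc ℚ) :=
  if 0 ≤ A then ∏ j ∈ Finset.range A.toNat, rsq (j : ℤ) G
  else ∏ j ∈ Finset.range (-A).toNat, (rsq (A + (j : ℤ)) G)⁻¹

/-- `r ∈ ℚ(q)` is a Laurent polynomial with integer coefficients, i.e. lies in
`ℤ[q,q⁻¹]`: `r = P(q)/q^s` for some `P ∈ ℤ[q]` and `s : ℕ`. -/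
def IsIntLaurent (r : RatFunc ℚ) : Prop :=
  ∃ (P : Polynomial ℤ) (s : ℕ),
    r * RatFunc.X ^ s = algebraMap (Polynomial ℚ) (RatFunc ℚ) (P.map (Int.castRingHom ℚ))

open PowerSeries

namespace PowerSeries

theorem constantCoeff_rescale {R : Type*} [CommSemiring R] (a : R) (f : R⟦X⟧) :
    constantCoeff (rescale a f) = constantCoeff f := by
  rw [← coeff_zero_eq_constantCoeff_apply, coeff_rescale, pow_zero, one_mul,
    coeff_zero_eq_constantCoeff_apply]

section Field

variable {k : Type*} [Field k]

theorem inv_inv_of_constantCoeff_ne_zero {f : k⟦X⟧} (h : constantCoeff f ≠ 0) : f⁻¹⁻¹ = f := by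
  rw [inv_eq_iff_mul_eq_one (by simpa using h), PowerSeries.mul_inv_cancel _ h]

theorem rescale_inv (a : k) (f : k⟦X⟧) : rescale a f⁻¹ = (rescale a f)⁻¹ := by
  by_cases h : constantCoeff f = 0
  · rw [inv_eq_zero.mpr h, map_zero, eq_comm, inv_eq_zero, constantCoeff_rescale, h]
  · rw [eq_inv_iff_mul_eq_one (by rwa [constantCoeff_rescale]), ← map_mul,
      PowerSeries.inv_mul_cancel _ h, map_one]

theorem prod_range_mul_inv_telescope (f : ℕ → k⟦X⟧) (hf : ∀ j, constantCoeff (f j) ≠ 0)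
    (n : ℕ) : ∏ j ∈ Finset.range n, f (j + 1) * (f j)⁻¹ = f n * (f 0)⁻¹ := by
  induction n with
  | zero => rw [Finset.prod_range_zero, PowerSeries.mul_inv_cancel _ (hf 0)]
  | succ n ih =>
    rw [Finset.prod_range_succ, ih]
    calc f n * (f 0)⁻¹ * (f (n + 1) * (f n)⁻¹)
        = f (n + 1) * (f 0)⁻¹ * (f n * (f n)⁻¹) := by ring
      _ = f (n + 1) * (f 0)⁻¹ := by rw [PowerSeries.mul_inv_cancel _ (hf n), mul_one]

end Field

variable {R : Type*} [CommRing R]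

section Subring

noncomputable def seriesOver (S : Subring R) : Subring R⟦X⟧ :=
  (map S.subtype).range

theorem mem_seriesOver {S : Subring R} {f : R⟦X⟧} :
    f ∈ seriesOver S ↔ ∀ n, coeff n f ∈ S := by
  constructor
  · rintro ⟨g, rfl⟩ n
    rw [coeff_map]
    exact (coeff n g).2
  · intro h
    exact ⟨mk fun n => ⟨coeff n f, h n⟩, by ext n; simp⟩

theorem rescale_mem_seriesOver {S : Subring R} {a : R} (ha : a ∈ S) {f : R⟦X⟧}
    (hf : f ∈ seriesOver S) : rescale a f ∈ seriesOver S := by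
  rw [mem_seriesOver] at hf ⊢
  intro n
  rw [coeff_rescale]
  exact mul_mem (pow_mem ha n) (hf n)

theorem inv_mem_seriesOver {k : Type*} [Field k] {S : Subring k} {f : k⟦X⟧}
    (hf : f ∈ seriesOver S) (h1 : constantCoeff f = 1) : f⁻¹ ∈ seriesOver S := by
  obtain ⟨g, rfl⟩ := hf
  have hg : constantCoeff g = ((1 : Sˣ) : S) := by
    apply Subtype.val_injective
    rw [Units.val_one, OneMemClass.coe_one, ← h1, ← coeff_zero_eq_constantCoeff_apply,
      ← coeff_zero_eq_constantCoeff_apply, coeff_map]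
    rfl
  refine ⟨invOfUnit g 1, ?_⟩
  rw [eq_comm, inv_eq_iff_mul_eq_one (by simp [h1]), ← map_mul, invOfUnit_mul g 1 hg, map_one]

end Subring

section Congruence

variable {m : ℕ}

theorem smodEq_X_pow_iff {f g : R⟦X⟧} :
    f ≡ g [SMOD Ideal.span {X ^ m}] ↔ ∀ i < m, coeff i f = coeff i g := by
  simp only [SModEq.sub_mem, Ideal.mem_span_singleton, X_pow_dvd_iff, map_sub, sub_eq_zero]

theorem trunc_smodEq (f : R⟦X⟧) : (trunc m f : R⟦X⟧) ≡ f [SMOD Ideal.span {X ^ m}] :=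
  smodEq_X_pow_iff.2 fun i hi => by rw [Polynomial.coeff_coe, coeff_trunc, if_pos hi]

theorem rescale_smodEq (a : R) {f g : R⟦X⟧} (h : f ≡ g [SMOD Ideal.span {X ^ m}]) :
    rescale a f ≡ rescale a g [SMOD Ideal.span {X ^ m}] :=
  smodEq_X_pow_iff.2 fun i hi => by rw [coeff_rescale, coeff_rescale, smodEq_X_pow_iff.1 h i hi]

theorem inv_smodEq {k : Type*} [Field k] {f g : k⟦X⟧} (hf : constantCoeff f ≠ 0)
    (hg : constantCoeff g ≠ 0) (h : f ≡ g [SMOD Ideal.span {X ^ m}]) :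
    f⁻¹ ≡ g⁻¹ [SMOD Ideal.span {X ^ m}] := by
  rw [SModEq.sub_mem] at h ⊢
  have hf' := PowerSeries.mul_inv_cancel f hf
  have hg' := PowerSeries.mul_inv_cancel g hg
  have : f⁻¹ - g⁻¹ = f⁻¹ * g⁻¹ * -(f - g) := by linear_combination (-f⁻¹) * hg' + g⁻¹ * hf'
  rw [this]
  exact Ideal.mul_mem_left _ _ (neg_mem h)

end Congruence

theorem mem_seriesOver_of_riccati {S : Subring R} (Φ : R⟦X⟧ → R⟦X⟧)
    (hΦ_mem : ∀ f ∈ seriesOver S, constantCoeff f = 1 → Φ f ∈ seriesOver S)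
    (hΦ_congr : ∀ (m : ℕ) (f g : R⟦X⟧), constantCoeff f = 1 → constantCoeff g = 1 →
      f ≡ g [SMOD Ideal.span {X ^ m}] → Φ f ≡ Φ g [SMOD Ideal.span {X ^ m}])
    {c : R} (hc : c ∈ S) {G : R⟦X⟧} (hG : 1 - G = C c * (X * Φ G)) : G ∈ seriesOver S := by
  have hG0 : constantCoeff G = 1 := by
    have := congrArg constantCoeff hG
    simp only [map_sub, map_one, map_mul, constantCoeff_C, constantCoeff_X, zero_mul,
      mul_zero] at this
    linear_combination -this
  have hcoeff (n : ℕ) : coeff (n + 1) G = -(c * coeff n (Φ G)) := by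
    have := congrArg (coeff (n + 1)) hG
    rw [map_sub, coeff_one, if_neg n.succ_ne_zero, coeff_C_mul, coeff_succ_X_mul] at this
    linear_combination -this
  rw [mem_seriesOver]
  intro n
  induction n using Nat.strong_induction_on with
  | _ n ih =>
    cases n with
    | zero => rw [coeff_zero_eq_constantCoeff_apply, hG0]; exact one_mem S
    | succ n =>
      -- the coefficient of `X^(n+1)` only sees `G` modulo `X^(n+1)`
      set T : R⟦X⟧ := (trunc (n + 1) G : R⟦X⟧)
      have hT : T ≡ G [SMOD Ideal.span {X ^ (n + 1)}] := trunc_smodEq G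
      have hT_mem : T ∈ seriesOver S := mem_seriesOver.2 fun i => by
        rw [Polynomial.coeff_coe, coeff_trunc]
        split_ifs with hi
        exacts [ih i hi, zero_mem S]
      have hT0 : constantCoeff T = 1 := by
        rw [← coeff_zero_eq_constantCoeff_apply, smodEq_X_pow_iff.1 hT 0 n.succ_pos,
          coeff_zero_eq_constantCoeff_apply, hG0]
      rw [hcoeff, ← smodEq_X_pow_iff.1 (hΦ_congr _ T G hT0 hG0 hT) n n.lt_succ_self]
      exact neg_mem (mul_mem hc (mem_seriesOver.1 (hΦ_mem T hT_mem hT0) n))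

end PowerSeries

theorem rsq_zero (f : PowerSeries (RatFunc ℚ)) : rsq 0 f = f := by
  rw [rsq, zpow_zero, rescale_one, RingHom.id_apply]

theorem rsq_rsq (c d : ℤ) (f : PowerSeries (RatFunc ℚ)) : rsq c (rsq d f) = rsq (c + d) f := by
  rw [rsq, rsq, rsq, rescale_rescale, ← zpow_add₀ RatFunc.X_ne_zero, add_comm d]

theorem constantCoeff_rsq (c : ℤ) (f : PowerSeries (RatFunc ℚ)) :
    constantCoeff (rsq c f) = constantCoeff f :=
  constantCoeff_rescale _ _

theorem rsq_ratio (c : ℤ) (F : PowerSeries (RatFunc ℚ)) :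
    rsq c (rsq 1 F * F⁻¹) = rsq (c + 1) F * (rsq c F)⁻¹ := by
  rw [rsq, map_mul, rescale_inv, ← rsq, ← rsq, rsq_rsq]

theorem riccatiProd_ratio {F : PowerSeries (RatFunc ℚ)} (hF : constantCoeff F ≠ 0) (A : ℤ) :
    riccatiProd A (rsq 1 F * F⁻¹) = rsq A F * F⁻¹ := by
  have hne (c : ℤ) : constantCoeff (rsq c F) ≠ 0 := by rwa [constantCoeff_rsq]
  unfold riccatiProd
  split_ifs with hA
  · have := prod_range_mul_inv_telescope (fun j : ℕ => rsq j F) (fun j => hne j) A.toNat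
    simp only [Nat.cast_add_one, Nat.cast_zero, Int.toNat_of_nonneg hA, rsq_zero] at this
    simpa only [rsq_ratio] using this
  · have := prod_range_mul_inv_telescope (fun j : ℕ => (rsq (A + j) F)⁻¹)
      (fun j => by simpa using hne _) (-A).toNat
    simp only [Nat.cast_add_one, Nat.cast_zero, add_zero, ← add_assoc,
      inv_inv_of_constantCoeff_ne_zero (hne _)] at this
    rw [show A + ((-A).toNat : ℤ) = 0 by omega, rsq_zero] at this
    simp only [rsq_ratio, PowerSeries.mul_inv_rev, inv_inv_of_constantCoeff_ne_zero (hne _)]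
    rw [mul_comm (rsq A F)]
    simpa only [mul_comm (rsq _ F)] using this

theorem riccati_of_qDifference {F : PowerSeries (RatFunc ℚ)} (hF : constantCoeff F ≠ 0)
    {A : ℤ} {c : RatFunc ℚ} (hq : F - rsq 1 F = PowerSeries.C c * (PowerSeries.X * rsq A F)) :
    1 - rsq 1 F * F⁻¹ = PowerSeries.C c * (PowerSeries.X * riccatiProd A (rsq 1 F * F⁻¹)) := by
  rw [riccatiProd_ratio hF, ← PowerSeries.mul_inv_cancel F hF, ← sub_mul, hq]
  ring

theorem one_sub_X_pow_ne_zero {j : ℕ} (hj : j ≠ 0) : (1 - RatFunc.X ^ j : RatFunc ℚ) ≠ 0 := by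
  rw [sub_ne_zero, ne_comm, ← RatFunc.algebraMap_X, ← map_pow,
    ← map_one (algebraMap (Polynomial ℚ) (RatFunc ℚ)), (RatFunc.algebraMap_injective ℚ).ne_iff]
  intro h
  simpa [hj] using congrArg Polynomial.natDegree h

theorem qPochR_ne_zero (k : ℕ) : qPochR k ≠ 0 :=
  Finset.prod_ne_zero_iff.2 fun _ hj =>
    one_sub_X_pow_ne_zero (Nat.pos_iff_ne_zero.1 (Finset.mem_Icc.1 hj).1)

theorem qPochR_succ (k : ℕ) : qPochR (k + 1) = qPochR k * (1 - RatFunc.X ^ (k + 1)) :=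
  Finset.prod_Icc_succ_top (Nat.le_add_left 1 k) _

theorem nahm_exponent_succ (A : ℤ) (k : ℕ) :
    A * (k + 1 : ℕ) * ((k + 1 : ℕ) + 1) / 2 = A * k * (k + 1) / 2 + A * (k + 1) := by
  obtain ⟨m, hm⟩ := Int.even_mul_succ_self (k : ℤ)
  rw [show A * (k : ℤ) * (k + 1) = 2 * (A * m) by linear_combination A * hm,
    show A * ((k + 1 : ℕ) : ℤ) * ((k + 1 : ℕ) + 1) = 2 * (A * m + A * (k + 1)) by
      push_cast; linear_combination A * hm,
    Int.mul_ediv_cancel_left _ two_ne_zero, Int.mul_ediv_cancel_left _ two_ne_zero]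

theorem coeff_succ_nahmF1 (A : ℤ) (k : ℕ) :
    coeff (k + 1) (nahmF1 A) * (1 - RatFunc.X ^ (k + 1)) =
      (-1) ^ A * RatFunc.X ^ A * RatFunc.X ^ (A * k) * coeff k (nahmF1 A) := by
  simp only [nahmF1, coeff_mk, qPochR_succ, nahm_exponent_succ]
  have hsign : (-1 : RatFunc ℚ) ^ (A * (k + 1 : ℕ)) = (-1) ^ A * (-1) ^ (A * k) := by
    rw [← zpow_add₀ (by norm_num)]; push_cast; ring_nf
  rw [hsign, zpow_add₀ RatFunc.X_ne_zero, mul_add_one A (k : ℤ), zpow_add₀ RatFunc.X_ne_zero]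
  field_simp [qPochR_ne_zero k, one_sub_X_pow_ne_zero k.succ_ne_zero]

theorem constantCoeff_nahmF1 (A : ℤ) : constantCoeff (nahmF1 A) = 1 := by
  simp [nahmF1, ← coeff_zero_eq_constantCoeff_apply, qPochR]

theorem nahmF1_sub_rsq_one (A : ℤ) :
    nahmF1 A - rsq 1 (nahmF1 A) =
      C ((-1 : RatFunc ℚ) ^ A * RatFunc.X ^ A) * (X * rsq A (nahmF1 A)) := by
  ext k
  rw [map_sub, coeff_C_mul, rsq, coeff_rescale]
  cases k with
  | zero => simp
  | succ k =>
    rw [coeff_succ_X_mul, rsq, coeff_rescale, zpow_one, ← zpow_natCast (RatFunc.X ^ A),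
      ← zpow_mul]
    linear_combination coeff_succ_nahmF1 A k

theorem riccatiProd_mem_seriesOver {S : Subring (RatFunc ℚ)} (hS : ∀ c : ℤ, RatFunc.X ^ c ∈ S)
    (A : ℤ) {f : PowerSeries (RatFunc ℚ)} (hf : f ∈ seriesOver S) (h1 : constantCoeff f = 1) :
    riccatiProd A f ∈ seriesOver S := by
  unfold riccatiProd rsq
  split_ifs
  · exact prod_mem fun j _ => rescale_mem_seriesOver (hS j) hf
  · exact prod_mem fun _ _ => inv_mem_seriesOver (rescale_mem_seriesOver (hS _) hf)
      (by rw [constantCoeff_rescale, h1])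

theorem riccatiProd_smodEq (A : ℤ) {m : ℕ} {f g : PowerSeries (RatFunc ℚ)}
    (hf : constantCoeff f ≠ 0) (hg : constantCoeff g ≠ 0)
    (h : f ≡ g [SMOD Ideal.span {X ^ m}]) :
    riccatiProd A f ≡ riccatiProd A g [SMOD Ideal.span {X ^ m}] := by
  unfold riccatiProd rsq
  split_ifs
  · exact SModEq.prod fun _ _ => rescale_smodEq _ h
  · exact SModEq.prod fun _ _ => inv_smodEq (by rwa [constantCoeff_rescale])
      (by rwa [constantCoeff_rescale]) (rescale_smodEq _ h)

theorem Subring.zpow_mem_of_inv_mem {k : Type*} [Field k] {S : Subring k} {x : k} (hx : x ∈ S)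
    (hx' : x⁻¹ ∈ S) : ∀ n : ℤ, x ^ n ∈ S
  | (n : ℕ) => by rw [zpow_natCast]; exact pow_mem hx n
  | .negSucc n => by rw [zpow_negSucc, ← inv_pow]; exact pow_mem hx' _

def intLaurent : Subring (RatFunc ℚ) where
  carrier := {r | IsIntLaurent r}
  mul_mem' := by
    rintro r r' ⟨P, s, hP⟩ ⟨P', s', hP'⟩
    refine ⟨P * P', s + s', ?_⟩
    rw [Polynomial.map_mul, map_mul, ← hP, ← hP', pow_add]
    ring
  one_mem' := ⟨1, 0, by simp⟩
  add_mem' := by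
    rintro r r' ⟨P, s, hP⟩ ⟨P', s', hP'⟩
    refine ⟨P * Polynomial.X ^ s' + P' * Polynomial.X ^ s, s + s', ?_⟩
    simp only [Polynomial.map_add, Polynomial.map_mul, Polynomial.map_pow, Polynomial.map_X,
      map_add, map_mul, map_pow, RatFunc.algebraMap_X, ← hP, ← hP', pow_add]
    ring
  zero_mem' := ⟨0, 0, by simp⟩
  neg_mem' := by
    rintro r ⟨P, s, hP⟩
    exact ⟨-P, s, by rw [Polynomial.map_neg, map_neg, ← hP, neg_mul]⟩

theorem X_mem_intLaurent : RatFunc.X ∈ intLaurent :=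
  ⟨Polynomial.X, 0, by simp⟩

theorem X_inv_mem_intLaurent : RatFunc.X⁻¹ ∈ intLaurent :=
  ⟨1, 1, by simp [RatFunc.X_ne_zero]⟩

theorem statement8 (A : ℤ) :
    (∀ k : ℕ, IsIntLaurent (PowerSeries.coeff k (ratioG A))) ∧
    1 - ratioG A =
      PowerSeries.C ((-1 : RatFunc ℚ) ^ A * RatFunc.X ^ A) *
        (PowerSeries.X * riccatiProd A (ratioG A)) := by
  have hF : constantCoeff (nahmF1 A) ≠ 0 := by rw [constantCoeff_nahmF1]; exact one_ne_zero
  have hriccati := riccati_of_qDifference hF (nahmF1_sub_rsq_one A)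
  have hc : (-1 : RatFunc ℚ) ^ A * RatFunc.X ^ A ∈ intLaurent := by
    rw [← mul_zpow, neg_one_mul]
    exact Subring.zpow_mem_of_inv_mem (neg_mem X_mem_intLaurent)
      (by rw [inv_neg]; exact neg_mem X_inv_mem_intLaurent) A
  have hG := mem_seriesOver_of_riccati (riccatiProd A)
    (fun f hf h1 => riccatiProd_mem_seriesOver
      (Subring.zpow_mem_of_inv_mem X_mem_intLaurent X_inv_mem_intLaurent) A hf h1)
    (fun m f g hf hg => riccatiProd_smodEq A (by simp [hf]) (by simp [hg])) hc hriccati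
  exact ⟨mem_seriesOver.1 hG, hriccati⟩
end

section
/- Let N ≥ 1 and let (L_n)_{n∈ℕ^N∖{0}} be a family of Laurent polynomials L_n ∈ ℤ[q,q^{−1}] (the data of an admissible series). Let p be a prime, m ≥ 1 an integer with p ∤ m, and ζ a primitive m-th root of unity. Substituting q = ζ + x and expanding each rational function of x as a Laurent series at x = 0, the series D(t,x) := p · ∑_{n≠0} ∑_{ℓ≥1, p∤ℓ} (L_n((ζ+x)^ℓ)/(ℓ(1−(ζ+x)^ℓ))) · t^{ℓn} is a well-defined element of x^{−1}·ℚ(ζ)[[t_1,…,t_N,x]] with at most a simple pole at x = 0, and x·D(t,x) ∈ p·ℤ_{(p)}[ζ][[t_1,…,t_N,x]]. (Here D(t,x) is the expansion at q = ζ + x of log F(t^p,q^p) − p·log F(t,q) for the admissible series F with data (L_n).) -/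
/-!
STATEMENT 10: Given the data `(L_n)` of an admissible series (integer Laurent
polynomials), a prime `p`, `m ≥ 1` with `p ∤ m`, and a primitive `m`-th root of unity
`ζ`, the expansion at `q = ζ + x` of `log F(t^p,q^p) - p log F(t,q)`, namely
`D(t,x) = p ∑_{n≠0} ∑_{ℓ≥1, p∤ℓ} (L_n((ζ+x)^ℓ)/(ℓ(1-(ζ+x)^ℓ))) t^{ℓn}`,
has (in each `t`-degree) at most a simple pole at `x = 0`, and
`x · D(t,x) ∈ p · ℤ_{(p)}[ζ][[t,x]]`.
-/

/-- `x` as a Laurent series. -/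
noncomputable def xLau (F : Type*) [Field F] : LaurentSeries F := HahnSeries.single 1 1

/-- Evaluation of an integer Laurent polynomial at an invertible element of a field of
Laurent series. -/
noncomputable def evalLaurentPoly {F : Type*} [Field F] (w : LaurentSeries F)
    (P : LaurentPolynomial ℤ) : LaurentSeries F :=
  Finsupp.sum P.coeff fun e c => (c : LaurentSeries F) * w ^ e

/-- The expansion at `q = ζ + x` of `log F(t^p,q^p) - p·log F(t,q)` for the admissible
series `F` with data `(L_n)`:
`D(t,x) = p ∑_{n≠0} ∑_{ℓ≥1,p∤ℓ} (L_n((ζ+x)^ℓ)/(ℓ(1-(ζ+x)^ℓ))) t^{ℓn}`,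
an element of `ℚ(ζ)((x))[[t_1,…,t_N]]`, summed coefficientwise in `t`. -/
noncomputable def dworkDiff {F : Type*} [Field F] (N p : ℕ) (ζ : F)
    (L : (Fin N →₀ ℕ) → LaurentPolynomial ℤ) :
    MvPowerSeries (Fin N) (LaurentSeries F) :=
  fun d => (p : LaurentSeries F) * ∑ᶠ x : (Fin N →₀ ℕ) × ℕ,
    (if x.1 ≠ 0 ∧ 1 ≤ x.2 ∧ ¬ p ∣ x.2 then
      MvPowerSeries.coeff d
        ((MvPowerSeries.monomial (x.2 • x.1))
          (evalLaurentPoly (((HahnSeries.C ζ : LaurentSeries F) + xLau F) ^ x.2) (L x.1) *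
            (((x.2 : LaurentSeries F)) *
              (1 - ((HahnSeries.C ζ : LaurentSeries F) + xLau F) ^ x.2))⁻¹))
    else 0)

/-- `y` lies in the subring `ℤ_{(p)}[ζ]` of `F`: `y = P(ζ)/b` with `P ∈ ℤ[X]`, `p ∤ b`. -/
def InZpZeta {F : Type*} [Field F] (p : ℕ) (ζ : F) (y : F) : Prop :=
  ∃ (P : Polynomial ℤ) (b : ℕ), ¬ (p ∣ b) ∧ (b : F) * y = Polynomial.aeval ζ P


/-!
Let `S = ℤ_{(p)}[ζ]`. As `p ∤ ℓ` and `p ∤ m`, the integer `ℓ`, the root `ζ` and, when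
`ζ^ℓ ≠ 1`, the element `1 - ζ^ℓ` (a divisor of `m = ∏_{0<k<m} (1 - ζ^k)`) are units
of `S`. Writing `(ζ + x)^ℓ = ζ^ℓ + x·G(x)` with `G(0) = ℓ ζ^(ℓ-1)`, the denominator
`ℓ(1 - (ζ+x)^ℓ)` is therefore a unit of `S[[x]]` when `ζ^ℓ ≠ 1` and `x` times a unit
when `ζ^ℓ = 1`, while `L_n((ζ+x)^ℓ)` lies in `S[[x]]` because `ζ + x` is a unit there.
So `x` times every summand of `D(t,x)/p` lies in `S[[x]]`.
-/

namespace IsPrimitiveRoot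

lemma one_sub_pow_dvd_order {R : Type*} [CommRing R] [IsDomain R] {μ : R} {m ℓ : ℕ}
    (hμ : IsPrimitiveRoot μ m) (hℓ : μ ^ ℓ ≠ 1) : 1 - μ ^ ℓ ∣ (m : R) := by
  rcases m with _ | n
  · simp
  have hmod : μ ^ ℓ = μ ^ (ℓ % (n + 1)) := by
    rw [hμ.eq_orderOf, pow_mod_orderOf]
  obtain ⟨k, hk⟩ : ∃ k, ℓ % (n + 1) = k + 1 :=
    Nat.exists_eq_succ_of_ne_zero fun h => hℓ (by rw [hmod, h, pow_zero])
  have hkn : k < n := by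
    have : ℓ % (n + 1) < n + 1 := Nat.mod_lt ℓ n.succ_pos
    omega
  rw [hmod, hk, Nat.cast_succ, ← hμ.prod_one_sub_pow_eq_order]
  exact Finset.dvd_prod_of_mem _ (Finset.mem_range.2 hkn)

end IsPrimitiveRoot

lemma PowerSeries.exists_C_add_X_pow_eq {R : Type*} [CommRing R] (a : R) (ℓ : ℕ) :
    ∃ G : PowerSeries R, (C a + X) ^ ℓ = C (a ^ ℓ) + X * G ∧
      constantCoeff G = ℓ * a ^ (ℓ - 1) := by
  refine ⟨∑ i ∈ Finset.range ℓ, (C a + X) ^ i * C a ^ (ℓ - 1 - i), ?_, ?_⟩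
  · have h := geom_sum₂_mul (C a + X) (C a) ℓ
    rw [add_sub_cancel_left] at h
    rw [map_pow]
    linear_combination -h
  · simp only [map_sum, map_mul, map_pow, map_add, constantCoeff_C, constantCoeff_X, add_zero]
    exact geom_sum₂_self a ℓ

namespace InZpZeta

variable {F : Type*} [Field F] {p : ℕ}

def subring (hp : p.Prime) (ζ : F) : Subring F where
  carrier := {y | InZpZeta p ζ y}
  zero_mem' := ⟨0, 1, hp.not_dvd_one, by simp⟩
  one_mem' := ⟨1, 1, hp.not_dvd_one, by simp⟩
  add_mem' := by
    rintro a b ⟨P, s, hs, hP⟩ ⟨Q, t, ht, hQ⟩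
    refine ⟨.C (t : ℤ) * P + .C (s : ℤ) * Q, s * t,
      fun h => (hp.dvd_mul.mp h).elim hs ht, ?_⟩
    push_cast [map_add, map_mul, Polynomial.aeval_C]
    linear_combination (t : F) * hP + (s : F) * hQ
  neg_mem' := by
    rintro a ⟨P, s, hs, hP⟩
    exact ⟨-P, s, hs, by rw [mul_neg, hP, map_neg]⟩
  mul_mem' := by
    rintro a b ⟨P, s, hs, hP⟩ ⟨Q, t, ht, hQ⟩
    refine ⟨P * Q, s * t, fun h => (hp.dvd_mul.mp h).elim hs ht, ?_⟩
    push_cast [map_mul]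
    linear_combination ((t : F) * b) * hP + Polynomial.aeval ζ P * hQ

variable (hp : p.Prime)

lemma self_mem (ζ : F) : ζ ∈ subring hp ζ :=
  ⟨.X, 1, hp.not_dvd_one, by simp⟩

variable {ζ : F}

lemma isPrimitiveRoot_mk {m : ℕ} (hζ : IsPrimitiveRoot ζ m) :
    IsPrimitiveRoot (⟨ζ, self_mem hp ζ⟩ : subring hp ζ) m :=
  hζ.of_map_of_injective (f := (subring hp ζ).subtype) Subtype.val_injective

lemma isUnit_natCast [CharZero F] {b : ℕ} (hb : ¬ p ∣ b) : IsUnit (b : subring hp ζ) := by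
  have hb0 : (b : F) ≠ 0 := Nat.cast_ne_zero.2 fun h => hb (h ▸ dvd_zero p)
  exact IsUnit.of_mul_eq_one ⟨(b : F)⁻¹, 1, b, hb, by simp [hb0]⟩
    (Subtype.ext (mul_inv_cancel₀ hb0))

end InZpZeta

namespace Subring

variable {F : Type*} [Field F] (S : Subring F)

noncomputable def toLaurentSeries : PowerSeries S →+* LaurentSeries F :=
  (HahnSeries.ofPowerSeries ℤ F).comp (PowerSeries.map S.subtype)

lemma toLaurentSeries_X : S.toLaurentSeries PowerSeries.X = xLau F := by
  simp [toLaurentSeries, HahnSeries.ofPowerSeries_X, xLau]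

lemma toLaurentSeries_C (a : S) : S.toLaurentSeries (PowerSeries.C a) = HahnSeries.C (a : F) := by
  simp [toLaurentSeries, HahnSeries.ofPowerSeries_C]

variable {S}

lemma coeff_toLaurentSeries_of_neg (g : PowerSeries S) {i : ℤ} (hi : i < 0) :
    (S.toLaurentSeries g).coeff i = 0 := by
  simp [toLaurentSeries, PowerSeries.coeff_coe, hi]

lemma coeff_toLaurentSeries_mem (g : PowerSeries S) (i : ℤ) :
    (S.toLaurentSeries g).coeff i ∈ S := by
  rw [toLaurentSeries, RingHom.comp_apply, PowerSeries.coeff_coe]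
  split_ifs
  exacts [zero_mem S, by simp]

lemma inv_toLaurentSeries_mem_range {g : PowerSeries S}
    (hg : IsUnit (PowerSeries.constantCoeff g)) :
    (S.toLaurentSeries g)⁻¹ ∈ S.toLaurentSeries.range := by
  obtain ⟨u, rfl⟩ := PowerSeries.isUnit_iff_constantCoeff.mpr hg
  exact ⟨↑u⁻¹, map_units_inv S.toLaurentSeries u⟩

end Subring

lemma evalLaurentPoly_mem {F : Type*} [Field F] {R : Subring (LaurentSeries F)}
    {w : LaurentSeries F} (hw : w ∈ R) (hw' : w⁻¹ ∈ R) (P : LaurentPolynomial ℤ) :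
    evalLaurentPoly w P ∈ R := by
  refine sum_mem fun e _ => mul_mem (intCast_mem R _) ?_
  obtain ⟨k, rfl | rfl⟩ := Int.eq_nat_or_neg e
  · exact zpow_natCast w k ▸ pow_mem hw k
  · rw [zpow_neg, zpow_natCast, ← inv_pow]
    exact pow_mem hw' k

section DworkDifference

variable {F : Type*} [Field F] [CharZero F] {p m : ℕ} {ζ : F}

lemma xLau_mul_inv_mem_range (hp : p.Prime) (hm : 0 < m) (hpm : ¬ p ∣ m)
    (hζ : IsPrimitiveRoot ζ m) {ℓ : ℕ} (hℓ : ¬ p ∣ ℓ) :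
    xLau F * ((ℓ : LaurentSeries F) * (1 - (HahnSeries.C ζ + xLau F) ^ ℓ))⁻¹ ∈
      (InZpZeta.subring hp ζ).toLaurentSeries.range := by
  set S := InZpZeta.subring hp ζ
  set ζ' : S := ⟨ζ, InZpZeta.self_mem hp ζ⟩
  have hζ' : IsPrimitiveRoot ζ' m := InZpZeta.isPrimitiveRoot_mk hp hζ
  have hℓunit : IsUnit (ℓ : S) := InZpZeta.isUnit_natCast hp hℓ
  obtain ⟨G, hU, hG⟩ := PowerSeries.exists_C_add_X_pow_eq ζ' ℓ
  have hq : (HahnSeries.C ζ + xLau F) ^ ℓ = S.toLaurentSeries (.C (ζ' ^ ℓ) + .X * G) := by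
    rw [← hU, map_pow, map_add, S.toLaurentSeries_C, S.toLaurentSeries_X]
  by_cases hz : ζ' ^ ℓ = 1
  · have hfactor : (ℓ : LaurentSeries F) * (1 - (HahnSeries.C ζ + xLau F) ^ ℓ) =
        xLau F * S.toLaurentSeries (-(ℓ * G)) := by
      rw [hq, hz, map_neg, map_mul, map_add, map_mul, map_natCast, S.toLaurentSeries_X,
        map_one, map_one]
      ring
    have hx : xLau F ≠ 0 := HahnSeries.single_ne_zero one_ne_zero
    rw [hfactor, mul_inv, ← mul_assoc, mul_inv_cancel₀ hx, one_mul]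
    refine Subring.inv_toLaurentSeries_mem_range ?_
    rw [map_neg, map_mul, map_natCast, hG]
    exact (hℓunit.mul (hℓunit.mul ((hζ'.isUnit hm.ne').pow _))).neg
  · have hunit : IsUnit (1 - ζ' ^ ℓ) :=
      isUnit_of_dvd_unit (hζ'.one_sub_pow_dvd_order hz) (InZpZeta.isUnit_natCast hp hpm)
    rw [hq, ← map_natCast S.toLaurentSeries, ← map_one S.toLaurentSeries, ← map_sub,
      ← map_mul]
    refine mul_mem ⟨.X, S.toLaurentSeries_X⟩ (Subring.inv_toLaurentSeries_mem_range ?_)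
    simpa using hℓunit.mul hunit

lemma xLau_mul_term_mem_range (hp : p.Prime) (hm : 0 < m) (hpm : ¬ p ∣ m)
    (hζ : IsPrimitiveRoot ζ m) (P : LaurentPolynomial ℤ) {ℓ : ℕ} (hℓ : ¬ p ∣ ℓ) :
    xLau F * (evalLaurentPoly ((HahnSeries.C ζ + xLau F) ^ ℓ) P *
      ((ℓ : LaurentSeries F) * (1 - (HahnSeries.C ζ + xLau F) ^ ℓ))⁻¹) ∈
      (InZpZeta.subring hp ζ).toLaurentSeries.range := by
  set S := InZpZeta.subring hp ζ
  set ζ' : S := ⟨ζ, InZpZeta.self_mem hp ζ⟩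
  have hq : S.toLaurentSeries (.C ζ' + .X) = HahnSeries.C ζ + xLau F := by
    rw [map_add, S.toLaurentSeries_C, S.toLaurentSeries_X]
  have hq_inv : (HahnSeries.C ζ + xLau F)⁻¹ ∈ S.toLaurentSeries.range := by
    refine hq ▸ Subring.inv_toLaurentSeries_mem_range ?_
    simpa using (InZpZeta.isPrimitiveRoot_mk hp hζ).isUnit hm.ne'
  rw [mul_left_comm]
  refine mul_mem (evalLaurentPoly_mem (pow_mem (RingHom.mem_range.2 ⟨_, hq⟩) ℓ) ?_ P)
    (xLau_mul_inv_mem_range hp hm hpm hζ hℓ)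
  exact inv_pow (HahnSeries.C ζ + xLau F) ℓ ▸ pow_mem hq_inv ℓ

lemma exists_xLau_mul_coeff_dworkDiff_eq (hp : p.Prime) (hm : 0 < m) (hpm : ¬ p ∣ m)
    (hζ : IsPrimitiveRoot ζ m) (N : ℕ) (L : (Fin N →₀ ℕ) → LaurentPolynomial ℤ)
    (d : Fin N →₀ ℕ) : ∃ g : PowerSeries (InZpZeta.subring hp ζ),
      xLau F * MvPowerSeries.coeff d (dworkDiff N p ζ L) =
        HahnSeries.C (p : F) * (InZpZeta.subring hp ζ).toLaurentSeries g := by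
  rw [MvPowerSeries.coeff_apply, dworkDiff, mul_left_comm, mul_finsum, ← map_natCast HahnSeries.C]
  suffices h :
      ∑ᶠ x : (Fin N →₀ ℕ) × ℕ, _ ∈ (InZpZeta.subring hp ζ).toLaurentSeries.range by
    obtain ⟨g, hg⟩ := h
    exact ⟨g, by rw [hg]⟩
  refine finsum_induction _ (zero_mem _) (fun _ _ => add_mem) fun ⟨n, ℓ⟩ => ?_
  simp only [MvPowerSeries.coeff_monomial, mul_ite, mul_zero]
  split_ifs with hterm
  · exact xLau_mul_term_mem_range hp hm hpm hζ (L n) hterm.2.2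
  all_goals exact zero_mem _

end DworkDifference

theorem statement10 (N p m : ℕ) (hp : p.Prime) (hm : 0 < m) (hpm : ¬ p ∣ m)
    (F : Type*) [Field F] [CharZero F] (ζ : F) (hζ : IsPrimitiveRoot ζ m)
    (L : (Fin N →₀ ℕ) → LaurentPolynomial ℤ) (d : Fin N →₀ ℕ) :
    (∀ i : ℤ, i < -1 →
      HahnSeries.coeff (MvPowerSeries.coeff d (dworkDiff N p ζ L)) i
        = 0) ∧
    (∀ i : ℤ, ∃ y : F, InZpZeta p ζ y ∧
      HahnSeries.coeff
          (xLau F * MvPowerSeries.coeff d (dworkDiff N p ζ L)) i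
        = (p : F) * y) := by
  obtain ⟨g, hg⟩ := exists_xLau_mul_coeff_dworkDiff_eq hp hm hpm hζ N L d
  have hcoeff (i : ℤ) : (xLau F * MvPowerSeries.coeff d (dworkDiff N p ζ L)).coeff i =
      p * ((InZpZeta.subring hp ζ).toLaurentSeries g).coeff i := by
    rw [hg, HahnSeries.C_mul_eq_smul, HahnSeries.coeff_smul, smul_eq_mul]
  refine ⟨fun i hi => ?_, fun i => ⟨_, Subring.coeff_toLaurentSeries_mem g i, hcoeff i⟩⟩
  have hshift := hcoeff (i + 1)
  rwa [xLau, HahnSeries.coeff_single_mul_add, one_mul,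
    Subring.coeff_toLaurentSeries_of_neg g (by omega), mul_zero] at hshift
end

section
/- Let m ≥ 1 and M ≥ 1 be integers. In the field ℚ(q) one has the identity ∑_{ℓ=0}^{m} (−1)^ℓ q^{−ℓ(ℓ−1)/2} · \binom{m}{ℓ}_{q^{−1}} · (∑_{j=0}^{ℓ−1} q^{Mj}) = −(q^{M+1−m};q)_{m−1}, i.e. the left-hand side equals −∏_{i=0}^{m−2}(1 − q^{M+1−m+i}). -/
/-!
Multiplying by `w - 1`, where `w = q^M`, turns each inner geometric sum into `w^ℓ - 1`, so by the
`q`-binomial theorem in base `p = q⁻¹` the left-hand side times `w - 1` is `(w;p)_m - (1;p)_m`, and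
`(1;p)_m = 0` for `m ≥ 1`. Finally `(w;p)_m = (1 - w) (p w;p)_{m-1}`, and reading the last product
backwards gives `(q^{M+1-m};q)_{m-1}`.
-/

/-- `(z;ρ)_k = ∏_{i=0}^{k-1} (1 - ρ^i z)`. -/
noncomputable def pochGen (z ρ : RatFunc ℚ) (k : ℕ) : RatFunc ℚ :=
  ∏ i ∈ Finset.range k, (1 - ρ ^ i * z)

/-- The Gaussian binomial coefficient at `q⁻¹`:
`binom(m,ℓ)_{q⁻¹} = (q⁻¹;q⁻¹)_m / ((q⁻¹;q⁻¹)_ℓ (q⁻¹;q⁻¹)_{m-ℓ})`. -/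
noncomputable def qInvBinom (m ℓ : ℕ) : RatFunc ℚ :=
  pochGen (RatFunc.X)⁻¹ (RatFunc.X)⁻¹ m /
    (pochGen (RatFunc.X)⁻¹ (RatFunc.X)⁻¹ ℓ * pochGen (RatFunc.X)⁻¹ (RatFunc.X)⁻¹ (m - ℓ))

open Finset

section QPochhammer

variable {K : Type*} [Field K]

def qPochhammer (z p : K) (n : ℕ) : K :=
  ∏ i ∈ range n, (1 - p ^ i * z)

/-- Set to `0` for `k > m`, so that the Pascal rule `gaussBinom_succ_succ` holds for every `k`. -/
def gaussBinom (p : K) (m k : ℕ) : K :=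
  if k ≤ m then qPochhammer p p m / (qPochhammer p p k * qPochhammer p p (m - k)) else 0

@[simp]
lemma qPochhammer_zero (z p : K) : qPochhammer z p 0 = 1 := prod_range_zero _

lemma qPochhammer_succ (z p : K) (n : ℕ) :
    qPochhammer z p (n + 1) = qPochhammer z p n * (1 - p ^ n * z) :=
  prod_range_succ _ n

lemma qPochhammer_succ' (z p : K) (n : ℕ) :
    qPochhammer z p (n + 1) = (1 - z) * qPochhammer (p * z) p n := by
  simp only [qPochhammer, prod_range_succ', pow_succ, mul_assoc, pow_zero, one_mul]
  ring

lemma qPochhammer_one_succ (p : K) (n : ℕ) : qPochhammer 1 p (n + 1) = 0 := by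
  simp [qPochhammer_succ']

lemma qPochhammer_mul_eq_pow_mul_inv {p : K} (hp : p ≠ 0) (z : K) (n : ℕ) :
    qPochhammer (p * z) p n = qPochhammer (p ^ n * z) p⁻¹ n := by
  rw [qPochhammer, ← prod_range_reflect]
  refine prod_congr rfl fun i hi => ?_
  obtain ⟨j, rfl⟩ : ∃ j, n = i + 1 + j := ⟨n - (i + 1), by grind⟩
  rw [show i + 1 + j - 1 - i = j by omega, inv_pow, pow_add, pow_add]
  field_simp

lemma qPochhammer_self_ne_zero {p : K} (hp : ¬IsOfFinOrder p) (n : ℕ) :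
    qPochhammer p p n ≠ 0 := by
  refine prod_ne_zero_iff.2 fun i _ => sub_ne_zero.2 fun h => hp ?_
  exact isOfFinOrder_iff_pow_eq_one.2 ⟨i + 1, i.succ_pos, by rw [pow_succ, h]⟩

lemma gaussBinom_zero_right {p : K} (hp : ¬IsOfFinOrder p) (m : ℕ) : gaussBinom p m 0 = 1 := by
  simp [gaussBinom, qPochhammer_self_ne_zero hp]

lemma gaussBinom_of_lt (p : K) {m k : ℕ} (h : m < k) : gaussBinom p m k = 0 :=
  if_neg h.not_ge

lemma gaussBinom_succ_succ {p : K} (hp : ¬IsOfFinOrder p) (m k : ℕ) :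
    gaussBinom p (m + 1) (k + 1) = p ^ (m - k) * gaussBinom p m k + gaussBinom p m (k + 1) := by
  rcases lt_trichotomy k m with hkm | rfl | hkm
  · obtain ⟨n, rfl⟩ : ∃ n, m = k + 1 + n := ⟨m - (k + 1), by omega⟩
    have h0 := qPochhammer_self_ne_zero hp
    have hk := h0 (k + 1)
    have hn := h0 (n + 1)
    rw [qPochhammer_succ] at hk hn
    simp only [gaussBinom, if_pos (show k + 1 ≤ k + 1 + n + 1 by omega),
      if_pos (show k ≤ k + 1 + n by omega), if_pos (show k + 1 ≤ k + 1 + n by omega),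
      show k + 1 + n + 1 - (k + 1) = n + 1 by omega, show k + 1 + n - k = n + 1 by omega,
      show k + 1 + n - (k + 1) = n by omega]
    rw [qPochhammer_succ p p (k + 1 + n), qPochhammer_succ p p k, qPochhammer_succ p p n,
      mul_div_assoc', div_add_div _ _ (mul_ne_zero (h0 k) hn) (mul_ne_zero hk (h0 n)),
      div_eq_div_iff (mul_ne_zero hk hn)
        (mul_ne_zero (mul_ne_zero (h0 k) hn) (mul_ne_zero hk (h0 n)))]
    ring
  · simp [gaussBinom, qPochhammer_self_ne_zero hp]
  · simp [gaussBinom_of_lt p hkm, gaussBinom_of_lt p (show m + 1 < k + 1 by omega),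
      gaussBinom_of_lt p (show m < k + 1 by omega)]

/-- The `q`-binomial theorem. -/
theorem sum_gaussBinom_mul_pow {p : K} (hp : ¬IsOfFinOrder p) (z : K) (m : ℕ) :
    ∑ k ∈ range (m + 1), (-1) ^ k * p ^ (k * (k - 1) / 2) * gaussBinom p m k * z ^ k =
      qPochhammer z p m := by
  induction m with
  | zero => simp [gaussBinom_zero_right hp]
  | succ m ih =>
    set t : ℕ → ℕ → K := fun m k => (-1) ^ k * p ^ (k * (k - 1) / 2) * gaussBinom p m k * z ^ k
    have ht0 : ∀ m, t m 0 = 1 := by simp [t, gaussBinom_zero_right hp]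
    -- Pascal's rule shifts each term of order `m + 1` into two terms of order `m`.
    have hstep : ∀ k ∈ range (m + 1), t (m + 1) (k + 1) = -(p ^ m * z) * t m k + t m (k + 1) := by
      intro k hk
      obtain ⟨j, rfl⟩ : ∃ j, m = k + j := ⟨m - k, by grind⟩
      simp only [t]
      rw [gaussBinom_succ_succ hp, Nat.triangle_succ, Nat.add_sub_cancel_left, pow_add, pow_add,
        pow_succ, pow_succ]
      ring
    have hlast : t m (m + 1) = 0 := by simp [t, gaussBinom_of_lt p m.lt_succ_self]
    calc ∑ k ∈ range (m + 2), t (m + 1) k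
        = t (m + 1) 0 + ∑ k ∈ range (m + 1), (-(p ^ m * z) * t m k + t m (k + 1)) := by
          rw [sum_range_succ', add_comm, sum_congr rfl hstep]
      _ = -(p ^ m * z) * ∑ k ∈ range (m + 1), t m k + ∑ k ∈ range (m + 2), t m k := by
          rw [sum_add_distrib, ← mul_sum, sum_range_succ' (t m) (m + 1), ht0, ht0]
          ring
      _ = qPochhammer z p (m + 1) := by
          rw [sum_range_succ (t m) (m + 1), hlast, add_zero, ih, qPochhammer_succ]
          ring

theorem sub_one_mul_sum_gaussBinom_mul_geom_sum {p : K} (hp : ¬IsOfFinOrder p) (z : K) (m : ℕ) :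
    (z - 1) * ∑ k ∈ range (m + 1),
        (-1) ^ k * p ^ (k * (k - 1) / 2) * gaussBinom p m k * ∑ j ∈ range k, z ^ j =
      qPochhammer z p m - qPochhammer 1 p m := by
  rw [← sum_gaussBinom_mul_pow hp z, ← sum_gaussBinom_mul_pow hp 1, ← sum_sub_distrib, mul_sum]
  refine sum_congr rfl fun k _ => ?_
  linear_combination (-1) ^ k * p ^ (k * (k - 1) / 2) * gaussBinom p m k * geom_sum_mul z k

end QPochhammer

namespace RatFunc

variable {K : Type*} [Field K]

lemma not_isOfFinOrder_X : ¬IsOfFinOrder (X : RatFunc K) := fun h => by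
  obtain ⟨n, hn, h⟩ := isOfFinOrder_iff_pow_eq_one.1 h
  have := congrArg intDegree h
  rw [← algebraMap_X, ← map_pow, intDegree_polynomial, Polynomial.natDegree_X_pow,
    intDegree_one] at this
  omega

lemma not_isOfFinOrder_X_inv : ¬IsOfFinOrder (X⁻¹ : RatFunc K) := fun h => by
  obtain ⟨n, hn, h⟩ := isOfFinOrder_iff_pow_eq_one.1 h
  rw [inv_pow, inv_eq_one] at h
  exact not_isOfFinOrder_X (isOfFinOrder_iff_pow_eq_one.2 ⟨n, hn, h⟩)

end RatFunc

open RatFunc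

lemma qInvBinom_eq_gaussBinom {m ℓ : ℕ} (h : ℓ ≤ m) : qInvBinom m ℓ = gaussBinom X⁻¹ m ℓ := by
  rw [gaussBinom, if_pos h]
  rfl

theorem statement12 (m M : ℕ) (hm : 1 ≤ m) (hM : 1 ≤ M) :
    ∑ ℓ ∈ Finset.range (m + 1),
      (-1 : RatFunc ℚ) ^ ℓ * RatFunc.X ^ (-((ℓ * (ℓ - 1) / 2 : ℕ) : ℤ)) *
        qInvBinom m ℓ * (∑ j ∈ Finset.range ℓ, RatFunc.X ^ (M * j)) =
    - ∏ i ∈ Finset.range (m - 1),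
        (1 - RatFunc.X ^ ((M : ℤ) + 1 - (m : ℤ) + (i : ℤ))) := by
  obtain ⟨n, rfl⟩ : ∃ n, m = n + 1 := ⟨m - 1, by omega⟩
  have hXM : (X : RatFunc ℚ) ^ M - 1 ≠ 0 :=
    sub_ne_zero.2 fun h => not_isOfFinOrder_X (isOfFinOrder_iff_pow_eq_one.2 ⟨M, hM, h⟩)
  have hlhs : ∀ ℓ ∈ range (n + 1 + 1),
      (-1 : RatFunc ℚ) ^ ℓ * X ^ (-((ℓ * (ℓ - 1) / 2 : ℕ) : ℤ)) * qInvBinom (n + 1) ℓ *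
          ∑ j ∈ range ℓ, X ^ (M * j) =
        (-1) ^ ℓ * X⁻¹ ^ (ℓ * (ℓ - 1) / 2) * gaussBinom X⁻¹ (n + 1) ℓ *
          ∑ j ∈ range ℓ, (X ^ M) ^ j := fun ℓ hℓ => by
    simp only [qInvBinom_eq_gaussBinom (mem_range_succ_iff.1 hℓ), zpow_neg, zpow_natCast, inv_pow,
      pow_mul]
  have hrhs : ∏ i ∈ range (n + 1 - 1), (1 - X ^ ((M : ℤ) + 1 - ((n + 1 : ℕ) : ℤ) + (i : ℤ))) =
      qPochhammer (X⁻¹ ^ n * X ^ M) (X : RatFunc ℚ) n := by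
    refine prod_congr (by rw [Nat.add_sub_cancel]) fun i _ => ?_
    rw [show (M : ℤ) + 1 - ((n + 1 : ℕ) : ℤ) + i = i + (-n + M) by push_cast; ring,
      zpow_add₀ X_ne_zero, zpow_add₀ X_ne_zero, zpow_neg, zpow_natCast, zpow_natCast, zpow_natCast,
      inv_pow]
  apply mul_left_cancel₀ hXM
  rw [sum_congr rfl hlhs, hrhs, sub_one_mul_sum_gaussBinom_mul_geom_sum not_isOfFinOrder_X_inv,
    qPochhammer_one_succ, sub_zero, qPochhammer_succ',
    qPochhammer_mul_eq_pow_mul_inv (inv_ne_zero X_ne_zero), inv_inv]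
  ring
end

section
/- Let m, ℓ ≥ 1 be integers and let ζ be a primitive m-th root of unity. Consider the q-Pochhammer symbol (q;q)_{mℓ−1} = ∏_{j=1}^{mℓ−1}(1 − q^j) as an element of ℤ[ζ][[u]] via the substitution q = ζ(1−u). Then its coefficient of u^i vanishes for all i < ℓ−1, and its coefficient of u^{ℓ−1} equals m^{2ℓ−1}·(ℓ−1)!. In other words, (q;q)_{mℓ−1} = m^{2ℓ−1}(ℓ−1)!·u^{ℓ−1} + O(u^ℓ) at q = ζ(1−u). -/
/-!
Factors `1 - q^j` with `m ∣ j` vanish to first order at `u = 0`: since `ζ^j = 1`, such a factor is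
`1 - (1-u)^j = u · (j + O(u))`. There are `ℓ - 1` of them, `j = m, 2m, …, (ℓ-1)m`, contributing
`u^{ℓ-1} · m^{ℓ-1} (ℓ-1)!` to leading order. The other factors are units with constant terms
`1 - ζ^j`; these are periodic in `j` with period `m`, so their product is `ℓ` copies of
`∏_{k=1}^{m-1} (1 - ζ^k) = m`.
-/

open Polynomial Finset

/-- The polynomial `(q;q)_{mℓ-1}` in the variable `u`, via `q = ζ(1-u)`. -/
noncomputable def pochAtRoot (K : Type*) [Field K] (ζ : K) (n : ℕ) : Polynomial K :=
  ∏ j ∈ Finset.Icc 1 n, (1 - (Polynomial.C ζ * (1 - Polynomial.X)) ^ j)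

theorem Function.Periodic.prod_range_mul {M : Type*} [CommMonoid M] {f : ℕ → M} {m : ℕ}
    (hf : Function.Periodic f m) (ℓ : ℕ) :
    ∏ j ∈ range (m * ℓ), f j = (∏ j ∈ range m, f j) ^ ℓ := by
  induction ℓ with
  | zero => simp
  | succ ℓ ih =>
    rw [Nat.mul_succ, prod_range_add, ih, pow_succ]
    congr 1
    refine prod_congr rfl fun j _ => ?_
    rw [add_comm, mul_comm]
    exact hf.nat_mul ℓ j

theorem Finset.prod_Icc_filter_dvd {M : Type*} [CommMonoid M] (F : ℕ → M) {m : ℕ}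
    (hm : 0 < m) (ℓ : ℕ) :
    ∏ j ∈ Icc 1 (m * ℓ - 1) with m ∣ j, F j = ∏ k ∈ range (ℓ - 1), F (m * (k + 1)) := by
  have hmul : ∀ a b, m * a < m * b ↔ a < b := fun _ _ => Nat.mul_lt_mul_left hm
  have himage : {j ∈ Icc 1 (m * ℓ - 1) | m ∣ j} = (range (ℓ - 1)).image fun k => m * (k + 1) := by
    ext j
    simp only [mem_filter, mem_Icc, mem_image, mem_range]
    constructor
    · rintro ⟨⟨h1, h2⟩, k, rfl⟩
      have hk : 0 < k := Nat.pos_of_mul_pos_left h1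
      have : k < ℓ := (hmul k ℓ).1 (by omega)
      exact ⟨k - 1, by omega, by rw [Nat.sub_add_cancel hk]⟩
    · rintro ⟨k, hk, rfl⟩
      have : m * (k + 1) < m * ℓ := (hmul _ _).2 (by omega)
      exact ⟨⟨Nat.mul_pos hm k.succ_pos, by omega⟩, dvd_mul_right _ _⟩
  rw [himage, prod_image fun a _ b _ h => by simpa using Nat.eq_of_mul_eq_mul_left hm h]

theorem IsPrimitiveRoot.prod_Icc_filter_not_dvd_one_sub_pow {R : Type*} [CommRing R]
    [IsDomain R] {m : ℕ} {ζ : R} (hm : 0 < m) (hζ : IsPrimitiveRoot ζ m) (ℓ : ℕ) :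
    ∏ j ∈ Icc 1 (m * ℓ - 1) with ¬ m ∣ j, (1 - ζ ^ j) = (m : R) ^ ℓ := by
  have hrange : {j ∈ Icc 1 (m * ℓ - 1) | ¬ m ∣ j} = {j ∈ range (m * ℓ) | ¬ m ∣ j} := by
    ext j
    rcases j.eq_zero_or_pos with rfl | hj
    · simp
    · simp only [mem_filter, mem_Icc, mem_range]
      omega
  have hperiodic : Function.Periodic (fun j => if ¬ m ∣ j then 1 - ζ ^ j else 1) m := fun j => by
    simp only [Nat.dvd_add_self_right, pow_add, hζ.pow_eq_one, mul_one]
  obtain ⟨n, rfl⟩ := Nat.exists_eq_add_one_of_ne_zero hm.ne'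
  rw [hrange, prod_filter, hperiodic.prod_range_mul, prod_range_succ', if_neg (by simp), mul_one,
    Nat.cast_succ, ← hζ.prod_one_sub_pow_eq_order]
  congr 1
  refine prod_congr rfl fun k hk => if_pos fun hdvd => ?_
  exact absurd (Nat.le_of_dvd k.succ_pos hdvd) (by simpa using hk)

theorem one_sub_C_mul_one_sub_X_pow_of_pow_eq_one {R : Type*} [CommRing R] {ζ : R} {n : ℕ}
    (hζ : ζ ^ n = 1) : 1 - (C ζ * (1 - X)) ^ n = X * ∑ i ∈ range n, (1 - X : R[X]) ^ i := by
  rw [mul_pow, ← C_pow, hζ, C_1, one_mul, ← mul_neg_geom_sum, sub_sub_cancel]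

theorem exists_pochAtRoot_eq_X_pow_mul {K : Type*} [Field K] {m : ℕ} {ζ : K} (hm : 0 < m)
    (hζ : IsPrimitiveRoot ζ m) (ℓ : ℕ) :
    ∃ Q : K[X], pochAtRoot K ζ (m * ℓ - 1) = X ^ (ℓ - 1) * Q ∧
      Q.eval 0 = (m : K) ^ (2 * ℓ - 1) * ((ℓ - 1).factorial : K) := by
  let geom (n : ℕ) : K[X] := ∑ i ∈ range n, (1 - X) ^ i
  refine ⟨(∏ k ∈ range (ℓ - 1), geom (m * (k + 1))) *
    ∏ j ∈ Icc 1 (m * ℓ - 1) with ¬ m ∣ j, (1 - (C ζ * (1 - X)) ^ j), ?_, ?_⟩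
  · have hmultiple (k : ℕ) : 1 - (C ζ * (1 - X)) ^ (m * (k + 1)) = X * geom (m * (k + 1)) :=
      one_sub_C_mul_one_sub_X_pow_of_pow_eq_one (by rw [pow_mul, hζ.pow_eq_one, one_pow])
    rw [pochAtRoot, ← prod_filter_mul_prod_filter_not _ (m ∣ ·), prod_Icc_filter_dvd _ hm,
      prod_congr rfl fun k _ => hmultiple k, prod_mul_distrib, prod_const, card_range, mul_assoc]
  · have hgeom (n : ℕ) : (geom n).eval 0 = n := by simp [geom, eval_finsetSum]
    simp only [eval_mul, eval_prod, hgeom, eval_sub, eval_one, eval_pow, eval_C, eval_X, sub_zero,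
      mul_one]
    rw [hζ.prod_Icc_filter_not_dvd_one_sub_pow hm, prod_congr rfl fun k _ => Nat.cast_mul m (k + 1),
      prod_mul_distrib, prod_const, card_range, ← Nat.cast_prod, prod_range_add_one_eq_factorial,
      show 2 * ℓ - 1 = ℓ - 1 + ℓ by omega, pow_add]
    ring

theorem statement13_general (K : Type*) [Field K] (m ℓ : ℕ) (hm : 0 < m)
    (ζ : K) (hζ : IsPrimitiveRoot ζ m) :
    (∀ i : ℕ, i < ℓ - 1 → (pochAtRoot K ζ (m * ℓ - 1)).coeff i = 0) ∧
    (pochAtRoot K ζ (m * ℓ - 1)).coeff (ℓ - 1)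
      = (m : K) ^ (2 * ℓ - 1) * ((ℓ - 1).factorial : K) := by
  obtain ⟨Q, hP, hQ⟩ := exists_pochAtRoot_eq_X_pow_mul hm hζ ℓ
  refine ⟨fun i hi => ?_, ?_⟩
  · rw [hP, coeff_X_pow_mul', if_neg (by omega)]
  · rw [hP, coeff_X_pow_mul', if_pos le_rfl, Nat.sub_self, coeff_zero_eq_eval_zero, hQ]

theorem statement13 (K : Type*) [Field K] [CharZero K] (m ℓ : ℕ) (hm : 0 < m)
    (hℓ : 0 < ℓ) (ζ : K) (hζ : IsPrimitiveRoot ζ m) :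
    (∀ i : ℕ, i < ℓ - 1 → (pochAtRoot K ζ (m * ℓ - 1)).coeff i = 0) ∧
    (pochAtRoot K ζ (m * ℓ - 1)).coeff (ℓ - 1)
      = (m : K) ^ (2 * ℓ - 1) * ((ℓ - 1).factorial : K) :=
  statement13_general K m ℓ hm ζ hζ
end

section
/- Let p ≥ 5 be a prime, s ≥ 1, and let F be a finite field with p^s elements. Define the finite dilogarithm li₂: F → F by li₂(x) = ∑_{k=1}^{p−1} (k²)^{−1} x^k, where k² is inverted in the prime field 𝔽_p ⊆ F. Then the 𝔽_p-linear span of the set { li₂(x)·(x−1)^{−p} : x ∈ F, x ≠ 1 } is all of F. -/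
/-!
Substituting `x = 1 + u⁻¹` turns `li₂(x)·(x-1)^{-p}` into `h(u) = ∑ k⁻² (u+1)^k u^{p-k}`, a
polynomial in `u`. Its coefficient of `u^p` is `∑ k⁻² = ∑_{x ∈ 𝔽_p} x² = 0` (as `p ≥ 5`) and its
coefficient of `u` is `(p-1)⁻² = 1`, so `0 < deg h < p`. If all values of `h` lay in a proper
subspace `V`, then `∏_{w ∈ V} (h - w)` would vanish on `F` while having degree
`|V| deg h < |V| p ≤ |F|`.
-/

open Polynomial Finset

theorem FiniteField.sum_inv_sq_eq_zero {K : Type*} [Field K] [Fintype K]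
    (hK : 3 < Fintype.card K) : ∑ x : K, (x ^ 2)⁻¹ = 0 := by
  calc ∑ x : K, (x ^ 2)⁻¹ = ∑ x : K, x⁻¹ ^ 2 := by simp only [inv_pow]
    _ = ∑ x : K, x ^ 2 := Equiv.sum_comp (Equiv.inv K) (· ^ 2)
    _ = 0 := FiniteField.sum_pow_lt_card_sub_one K 2 (by omega)

theorem ZMod.sum_Icc_natCast_eq_sum {p : ℕ} [NeZero p] {M : Type*} [AddCommMonoid M]
    (f : ZMod p → M) (hf : f 0 = 0) : ∑ k ∈ Icc 1 (p - 1), f k = ∑ x : ZMod p, f x := by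
  have hp : 0 < p := Nat.pos_of_neZero p
  calc ∑ k ∈ Icc 1 (p - 1), f k = ∑ k ∈ range p, f k := by
        rw [sum_range_eq_add_Ico _ hp, Nat.cast_zero, hf, zero_add,
          Icc_sub_one_right_eq_Ico_of_not_isMin (by simpa using hp.ne')]
    _ = ∑ x : ZMod p, f x :=
        sum_nbij' (↑) ZMod.val (by simp) (by simp [ZMod.val_lt])
          (fun k hk => ZMod.val_cast_of_lt (mem_range.1 hk)) (fun x _ => ZMod.natCast_zmod_val x)
          (fun _ _ => rfl)

theorem sum_Icc_inv_sq_natCast_eq_zero {F : Type*} [Field F] (p : ℕ) [CharP F p] (hp : p.Prime)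
    (h3 : 3 < p) : ∑ k ∈ Icc 1 (p - 1), ((k : F) ^ 2)⁻¹ = 0 := by
  have : Fact p.Prime := ⟨hp⟩
  have hZ : ∑ k ∈ Icc 1 (p - 1), ((k : ZMod p) ^ 2)⁻¹ = 0 := by
    rw [ZMod.sum_Icc_natCast_eq_sum (fun x => (x ^ 2)⁻¹) (by simp)]
    exact FiniteField.sum_inv_sq_eq_zero (by rwa [ZMod.card])
  simpa using congrArg (ZMod.castHom (dvd_refl p) F) hZ

theorem Submodule.card_mul_card_le_of_ne_top {K M : Type*} [Field K] [Finite K] [AddCommGroup M]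
    [Module K M] [Finite M] {V : Submodule K M} (hV : V ≠ ⊤) :
    Nat.card V * Nat.card K ≤ Nat.card M := by
  rw [Module.natCard_eq_pow_finrank (K := K) (V := V),
    Module.natCard_eq_pow_finrank (K := K) (V := M), ← pow_succ]
  exact Nat.pow_le_pow_right Nat.card_pos (Submodule.finrank_lt hV)

theorem Submodule.eq_top_of_forall_eval_mem {K F : Type*} [Field K] [Finite K] [Field F]
    [Finite F] [Algebra K F] (V : Submodule K F) {h : F[X]} (h_pos : 0 < h.natDegree)
    (h_lt : h.natDegree < Nat.card K) (hV : ∀ u, h.eval u ∈ V) : V = ⊤ := by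
  classical
  have := Fintype.ofFinite F
  by_contra hne
  set Q : F[X] := (∏ w : V, (X - C (w : F))).comp h
  have hQ_deg : Q.natDegree = Nat.card V * h.natDegree := by
    rw [natDegree_comp,
      Polynomial.natDegree_prod _ (fun w : V => X - C (w : F)) fun _ _ => X_sub_C_ne_zero _]
    simp [Nat.card_eq_fintype_card]
  have hQ_eval : ∀ u, Q.eval u = 0 := fun u => by
    rw [eval_comp, eval_prod]
    exact prod_eq_zero (i := ⟨h.eval u, hV u⟩) (mem_univ _) (by simp)
  have hQ_ne : Q ≠ 0 := by
    refine ne_zero_of_natDegree_gt (n := 0) ?_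
    rw [hQ_deg]
    exact Nat.mul_pos Nat.card_pos h_pos
  refine hQ_ne (eq_zero_of_natDegree_lt_card_of_eval_eq_zero Q Function.injective_id hQ_eval ?_)
  calc Q.natDegree = Nat.card V * h.natDegree := hQ_deg
    _ < Nat.card V * Nat.card K := Nat.mul_lt_mul_of_pos_left h_lt Nat.card_pos
    _ ≤ Nat.card F := V.card_mul_card_le_of_ne_top hne
    _ = Fintype.card F := Nat.card_eq_fintype_card

section Dilog

variable {F : Type*} [Field F]

def finiteDilog (p : ℕ) (x : F) : F := ∑ k ∈ Icc 1 (p - 1), ((k : F) ^ 2)⁻¹ * x ^ k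

variable (F) in
noncomputable def dilogPoly (p : ℕ) : F[X] :=
  ∑ k ∈ Icc 1 (p - 1), C ((k : F) ^ 2)⁻¹ * (X + 1) ^ k * X ^ (p - k)

theorem eval_dilogPoly {p : ℕ} {u : F} (hu : u ≠ 0) :
    (dilogPoly F p).eval u = finiteDilog p (1 + u⁻¹) * u ^ p := by
  simp only [dilogPoly, finiteDilog, eval_finsetSum, eval_mul, eval_C, eval_pow, eval_add, eval_X,
    eval_one, sum_mul]
  refine sum_congr rfl fun k hk => ?_
  have hkp : k ≤ p := by grind
  have hu1 : u + 1 = (1 + u⁻¹) * u := by field_simp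
  rw [hu1, mul_pow, ← Nat.sub_add_cancel hkp, pow_add u (p - k), Nat.add_sub_cancel]
  ring

theorem eval_dilogPoly_zero (p : ℕ) : (dilogPoly F p).eval 0 = 0 := by
  simp only [dilogPoly, eval_finsetSum, eval_mul, eval_pow, eval_X]
  refine sum_eq_zero fun k hk => ?_
  rw [zero_pow (by grind), mul_zero]

theorem coeff_dilogPoly_self (p : ℕ) :
    (dilogPoly F p).coeff p = ∑ k ∈ Icc 1 (p - 1), ((k : F) ^ 2)⁻¹ := by
  simp only [dilogPoly, finsetSum_coeff]
  refine sum_congr rfl fun k hk => ?_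
  rw [mul_assoc, coeff_C_mul, coeff_mul_X_pow', if_pos (Nat.sub_le _ _),
    Nat.sub_sub_self (by grind), coeff_X_add_one_pow, Nat.choose_self, Nat.cast_one,
    mul_one]

theorem coeff_dilogPoly_one (p : ℕ) [CharP F p] (hp : 2 ≤ p) : (dilogPoly F p).coeff 1 = 1 := by
  simp only [dilogPoly, finsetSum_coeff]
  rw [sum_eq_single_of_mem (p - 1) (by simp; omega)]
  · rw [mul_assoc, coeff_C_mul, coeff_mul_X_pow', if_pos (by omega),
      show 1 - (p - (p - 1)) = 0 by omega, coeff_X_add_one_pow, Nat.choose_zero_right,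
      Nat.cast_one, mul_one, Nat.cast_pred (by omega), CharP.cast_eq_zero, zero_sub]
    simp
  · intro k hk hne
    rw [mul_assoc, coeff_C_mul, coeff_mul_X_pow', if_neg (by grind), mul_zero]

theorem natDegree_dilogPoly_le (p : ℕ) : (dilogPoly F p).natDegree ≤ p := by
  refine natDegree_sum_le_of_forall_le _ _ fun k hk => ?_
  have hX1 : (X + 1 : F[X]).natDegree ≤ 1 := natDegree_add_le_of_degree_le natDegree_X_le (by simp)
  calc (C ((k : F) ^ 2)⁻¹ * (X + 1) ^ k * X ^ (p - k)).natDegree ≤ k * 1 + (p - k) * 1 :=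
        natDegree_mul_le_of_le ((natDegree_C_mul_le _ _).trans (natDegree_pow_le_of_le k hX1))
          (natDegree_pow_le_of_le _ natDegree_X_le)
    _ = p := by grind

theorem natDegree_dilogPoly_pos (p : ℕ) [CharP F p] (hp : 2 ≤ p) :
    0 < (dilogPoly F p).natDegree :=
  le_natDegree_of_ne_zero (by rw [coeff_dilogPoly_one p hp]; exact one_ne_zero)

theorem natDegree_dilogPoly_lt (p : ℕ) [CharP F p] (hp : p.Prime) (h3 : 3 < p) :
    (dilogPoly F p).natDegree < p := by
  refine (natDegree_dilogPoly_le p).lt_of_ne fun hdeg => ?_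
  have hne : dilogPoly F p ≠ 0 := ne_zero_of_natDegree_gt (natDegree_dilogPoly_pos p hp.two_le)
  apply leadingCoeff_ne_zero.mpr hne
  rw [leadingCoeff, hdeg, coeff_dilogPoly_self, sum_Icc_inv_sq_natCast_eq_zero p hp h3]

end Dilog

theorem statement15_general (p : ℕ) (hp : p.Prime) (h5 : 5 ≤ p)
    (F : Type*) [Field F] [Fintype F] [Algebra (ZMod p) F] :
    Submodule.span (ZMod p)
      {y : F | ∃ x : F, x ≠ 1 ∧
        y = (∑ k ∈ Finset.Icc 1 (p - 1), ((k : F) ^ 2)⁻¹ * x ^ k) * ((x - 1) ^ p)⁻¹}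
      = ⊤ := by
  have : Fact p.Prime := ⟨hp⟩
  have : CharP F p := charP_of_injective_algebraMap (algebraMap (ZMod p) F).injective p
  refine Submodule.eq_top_of_forall_eval_mem _ (natDegree_dilogPoly_pos p hp.two_le)
    (by rw [Nat.card_zmod]; exact natDegree_dilogPoly_lt p hp (by omega)) fun u => ?_
  rcases eq_or_ne u 0 with rfl | hu
  · rw [eval_dilogPoly_zero]
    exact Submodule.zero_mem _
  · refine Submodule.subset_span ⟨1 + u⁻¹, by simpa using hu, ?_⟩
    rw [eval_dilogPoly hu, finiteDilog, add_sub_cancel_left, inv_pow, inv_inv]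

theorem statement15 (p s : ℕ) (hp : p.Prime) (h5 : 5 ≤ p) (hs : 1 ≤ s)
    (F : Type*) [Field F] [Fintype F] [Algebra (ZMod p) F]
    (hcard : Fintype.card F = p ^ s) :
    Submodule.span (ZMod p)
      {y : F | ∃ x : F, x ≠ 1 ∧
        y = (∑ k ∈ Finset.Icc 1 (p - 1), ((k : F) ^ 2)⁻¹ * x ^ k) * ((x - 1) ^ p)⁻¹}
      = ⊤ :=
  statement15_general p hp h5 F
end

section
/- For every integer n ≥ 1, the product ∏_{m ∣ n} |disc(Φ_m)| of the absolute values of the discriminants of the cyclotomic polynomials Φ_m, taken over all positive divisors m of n, divides n^n, and the quotient n^n / ∏_{m∣n} |disc(Φ_m)| is a perfect square. (Hence D₂(n) := n^{n/2} · ∏_{m∣n} |disc(Φ_m)|^{−1/2} is a positive integer.) -/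
/-!
The `n`-th roots of unity are the disjoint union, over the divisors `m` of `n`, of the primitive
`m`-th roots of unity. Hence the product of `ζ - ζ'` over ordered pairs of distinct `n`-th roots,
whose absolute value is `∏ |n ζ^(n-1)| = n^n`, splits into the pairs of equal order, which give
the discriminants of the `Φ_m`, and the pairs of distinct orders `a ≠ b`, which give the
resultants `Res(Φ_a, Φ_b) ∈ ℤ`. Since `|Res(Φ_a, Φ_b)| = |Res(Φ_b, Φ_a)|`, the latter product is
a perfect square.
-/

/-- `|disc(Φ_m)| = |∏_{ζ ≠ ζ'} (ζ - ζ')|`, the product over ordered pairs of distinct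
primitive `m`-th roots of unity in `ℂ`. -/
noncomputable def absDiscCyclotomic (m : ℕ) : ℝ :=
  ‖∏ ζ ∈ primitiveRoots m ℂ, ∏ ζ' ∈ (primitiveRoots m ℂ).erase ζ, (ζ - ζ')‖

open Polynomial Finset

namespace Finset

variable {ι α M : Type*} [DecidableEq ι] [DecidableEq α] [CommMonoid M]

theorem prod_prod_erase_biUnion (D : Finset ι) {P : ι → Finset α}
    (hP : (D : Set ι).PairwiseDisjoint P) (f : α → α → M) :
    ∏ x ∈ D.biUnion P, ∏ y ∈ (D.biUnion P).erase x, f x y =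
      (∏ a ∈ D, ∏ x ∈ P a, ∏ y ∈ (P a).erase x, f x y) *
        ∏ a ∈ D, ∏ b ∈ D.erase a, ∏ x ∈ P a, ∏ y ∈ P b, f x y := by
  rw [prod_biUnion hP, ← prod_mul_distrib]
  refine prod_congr rfl fun a ha => ?_
  rw [prod_comm (s := D.erase a), ← prod_mul_distrib]
  refine prod_congr rfl fun x hx => ?_
  have hdisj : (D : Set ι).PairwiseDisjoint fun b => (P b).erase x := fun b hb c hc hbc =>
    (hP hb hc hbc).mono (erase_subset _ _) (erase_subset _ _)
  rw [erase_biUnion, prod_biUnion hdisj, ← mul_prod_erase D _ ha]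
  congr 1
  refine prod_congr rfl fun b hb => ?_
  rw [erase_eq_of_notMem]
  exact disjoint_left.mp (hP ha (mem_of_mem_erase hb) (ne_of_mem_erase hb).symm) hx

theorem isSquare_prod_prod_erase_of_symm (s : Finset ι) {g : ι → ι → M}
    (hg : ∀ a ∈ s, ∀ b ∈ s, g a b = g b a) : IsSquare (∏ a ∈ s, ∏ b ∈ s.erase a, g a b) := by
  induction s using Finset.induction_on with
  | empty => simp
  | insert c s hc ih =>
    have hrow : ∀ a ∈ s,
        ∏ b ∈ (insert c s).erase a, g a b = g c a * ∏ b ∈ s.erase a, g a b := by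
      intro a ha
      rw [erase_insert_of_ne (ne_of_mem_of_not_mem ha hc).symm,
        prod_insert fun h => hc (mem_of_mem_erase h),
        hg a (mem_insert_of_mem ha) c (mem_insert_self c s)]
    rw [prod_insert hc, erase_insert hc, prod_congr rfl hrow, prod_mul_distrib, ← mul_assoc]
    exact (IsSquare.mul_self _).mul
      (ih fun a ha b hb => hg a (mem_insert_of_mem ha) b (mem_insert_of_mem hb))

end Finset

theorem IsPrimitiveRoot.prod_sub_nthRootsFinset_erase {K : Type*} [CommRing K] [IsDomain K]
    [DecidableEq K] {ω : K} {n : ℕ} (hω : IsPrimitiveRoot ω n) (hn : 0 < n) {ζ : K}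
    (hζ : ζ ∈ nthRootsFinset n (1 : K)) :
    ∏ ζ' ∈ (nthRootsFinset n (1 : K)).erase ζ, (ζ - ζ') = n * ζ ^ (n - 1) := by
  have key := eval_multiset_prod_X_sub_C_derivative (S := (nthRootsFinset n (1 : K)).val) hζ
  rw [← Finset.prod_eq_multiset_prod, ← X_pow_sub_one_eq_prod hn hω] at key
  rw [Finset.prod_eq_multiset_prod, erase_val]
  simpa [derivative_X_pow] using key.symm

theorem norm_prod_prod_sub_nthRootsFinset (n : ℕ) :
    ‖∏ ζ ∈ nthRootsFinset n (1 : ℂ), ∏ ζ' ∈ (nthRootsFinset n (1 : ℂ)).erase ζ, (ζ - ζ')‖ =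
      (n : ℝ) ^ n := by
  rcases n.eq_zero_or_pos with rfl | hn
  · simp
  have hω := Complex.isPrimitiveRoot_exp n hn.ne'
  rw [norm_prod, prod_congr rfl fun ζ hζ => by
    rw [hω.prod_sub_nthRootsFinset_erase hn hζ, norm_mul, norm_pow,
      Complex.norm_eq_one_of_pow_eq_one ((mem_nthRootsFinset hn 1).mp hζ) hn.ne']]
  simp [hω.card_nthRootsFinset]

theorem intCast_resultant_cyclotomic {a b : ℕ} (ha : a ≠ 0) (hb : b ≠ 0) :
    ((resultant (cyclotomic a ℤ) (cyclotomic b ℤ) : ℤ) : ℂ) =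
      ∏ ζ ∈ primitiveRoots a ℂ, ∏ ζ' ∈ primitiveRoots b ℂ, (ζ - ζ') := by
  have : NeZero (a : ℂ) := ⟨by exact_mod_cast ha⟩
  have : NeZero (b : ℂ) := ⟨by exact_mod_cast hb⟩
  have hroots := resultant_eq_prod_roots_sub _ _ (cyclotomic.monic a ℂ) (cyclotomic.monic b ℂ)
    (IsAlgClosed.splits _) (IsAlgClosed.splits _)
  rw [← eq_intCast (Int.castRingHom ℂ), ← resultant_map_map]
  simp only [natDegree_cyclotomic] at hroots ⊢
  rw [map_cyclotomic, map_cyclotomic, hroots, cyclotomic.roots_eq_primitiveRoots_val,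
    cyclotomic.roots_eq_primitiveRoots_val, ← product_val, ← prod_product']
  rfl

theorem natAbs_resultant_comm (f g : ℤ[X]) :
    (resultant f g).natAbs = (resultant g f).natAbs := by
  rw [resultant_comm]
  simp [Int.natAbs_mul, Int.natAbs_pow]

theorem statement16_general (n : ℕ) :
    ∃ k : ℕ, IsSquare k ∧
      (∏ m ∈ n.divisors, absDiscCyclotomic m) * (k : ℝ) = (n : ℝ) ^ n := by
  refine ⟨∏ a ∈ n.divisors, ∏ b ∈ n.divisors.erase a,
      (resultant (cyclotomic a ℤ) (cyclotomic b ℤ)).natAbs,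
    isSquare_prod_prod_erase_of_symm _ fun a _ b _ => natAbs_resultant_comm _ _, ?_⟩
  rw [← norm_prod_prod_sub_nthRootsFinset,
    IsPrimitiveRoot.nthRoots_one_eq_biUnion_primitiveRoots,
    prod_prod_erase_biUnion _ fun a _ b _ => IsPrimitiveRoot.disjoint, norm_mul, norm_prod]
  congr 1
  push_cast
  rw [norm_prod]
  refine prod_congr rfl fun a ha => ?_
  rw [norm_prod]
  refine prod_congr rfl fun b hb => ?_
  rw [← intCast_resultant_cyclotomic (Nat.pos_of_mem_divisors ha).ne'
    (Nat.pos_of_mem_divisors (mem_of_mem_erase hb)).ne', Complex.norm_intCast, Nat.cast_natAbs,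
    Int.cast_abs]

theorem statement16 (n : ℕ) (hn : 1 ≤ n) :
    ∃ k : ℕ, IsSquare k ∧
      (∏ m ∈ n.divisors, absDiscCyclotomic m) * (k : ℝ) = (n : ℝ) ^ n :=
  statement16_general n
end

section
/- Let p be a prime and A a commutative ring that is p-torsion-free and p-adically complete (A ≅ lim_n A/p^nA). Let φ: A → A be a ring endomorphism of finite order (φ^s = id for some s ≥ 1) satisfying φ(a) ≡ a^p (mod pA) for all a ∈ A, and let ζ ∈ A satisfy φ(ζ) = ζ^p. Extend φ to A[1/p] and then coefficientwise to power series. Let f ∈ A[1/p][[x]] have constant term 1. Then f ∈ A[[x]] if and only if both: (i) the coefficient of x in f lies in A, and (ii) φ(f)((ζ+x)^p − ζ^p) / f(x)^p ∈ 1 + p·x·A[[x]], where φ(f)((ζ+x)^p − ζ^p) denotes the composition of the power series φ(f) with the polynomial (ζ+x)^p − ζ^p (which has zero constant term). -/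
/-!
Modulo `p`, the polynomial `(ζ + x)^p - ζ^p` becomes `x^p` and `φ` becomes Frobenius, so
`φ(F)((ζ + x)^p - ζ^p) ≡ F^p (mod p)` for every `F ∈ A[[x]]`; this gives the forward direction.
Conversely, suppose the coefficients of `f` below `x^n`, `n ≥ 2`, lie in `A`, and let `a` be the
coefficient of `x^n`. Comparing coefficients of `x^n` in (ii) and dividing by `p` gives
`a = ψ(a)·w + e` with `e ∈ A` and `p·w = (pζ^(p-1))^n` (the linear coefficient of
`(ζ + x)^p - ζ^p`, raised to the `n`-th power), so `w ∈ pA`. Iterating `s` times and using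
`ψ^s = id` gives `(1 - v)·a ∈ A` with `v ∈ pA`, and `1 - v` is a unit since `A` is `p`-adically
complete. For `n = 1` the factor `w = ζ^(p-1)` need not lie in `pA`, hence hypothesis (i).
-/

/-- Composition `f(g(x))` of a power series with a polynomial whose constant term is
zero, defined coefficientwise (only `k ≤ n` contribute to the coefficient of `x^n`). -/
noncomputable def compPoly {B : Type*} [CommRing B] (f : PowerSeries B)
    (g : Polynomial B) : PowerSeries B :=
  PowerSeries.mk fun n => ∑ k ∈ Finset.range (n + 1),
    PowerSeries.coeff k f * (g ^ k).coeff n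

open PowerSeries
open scoped Polynomial

namespace Polynomial

variable {R : Type*} [CommSemiring R] {g : R[X]}

theorem coeff_pow_of_lt (hg : g.coeff 0 = 0) {k n : ℕ} (hn : n < k) : (g ^ k).coeff n = 0 := by
  obtain ⟨g, rfl⟩ := X_dvd_iff.2 hg
  rw [mul_pow, coeff_X_pow_mul', if_neg (not_le.2 hn)]

theorem coeff_pow_self (hg : g.coeff 0 = 0) (k : ℕ) : (g ^ k).coeff k = g.coeff 1 ^ k := by
  obtain ⟨g, rfl⟩ := X_dvd_iff.2 hg
  rw [mul_pow, coeff_X_pow_mul', if_pos le_rfl, Nat.sub_self, coeff_zero_eq_eval_zero,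
    eval_pow, ← coeff_zero_eq_eval_zero, coeff_X_mul]

theorem coeff_zero_C_add_X_pow_sub_C_pow {R : Type*} [CommRing R] (a : R) (n : ℕ) :
    ((C a + X) ^ n - C (a ^ n)).coeff 0 = 0 := by
  simp [coeff_zero_eq_eval_zero]

theorem natCast_dvd_C_add_X_pow_sub_C_pow_sub_X_pow {R : Type*} [CommRing R] {p : ℕ}
    (hp : p.Prime) (a : R) : (p : R[X]) ∣ (C a + X) ^ p - C (a ^ p) - X ^ p := by
  obtain ⟨r, hr⟩ := exists_add_pow_prime_eq hp (C a) X
  exact ⟨C a * X * r, by rw [hr, C_pow]; ring⟩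

end Polynomial

namespace PowerSeries

variable {R S : Type*} [CommRing R] [CommRing S] {σ : R →+* S}

theorem mem_range_map_iff {f : S⟦X⟧} : f ∈ (map σ).range ↔ ∀ n, ∃ a, coeff n f = σ a := by
  constructor
  · rintro ⟨F, rfl⟩ n
    exact ⟨coeff n F, coeff_map σ n F⟩
  · intro hf
    choose a ha using hf
    exact ⟨mk a, ext fun n => by rw [coeff_map, coeff_mk, ha]⟩

theorem exists_map_eq_and_constantCoeff_eq_one {f : S⟦X⟧} (hf : f ∈ (map σ).range)
    (hf0 : constantCoeff f = 1) : ∃ F, constantCoeff F = 1 ∧ map σ F = f := by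
  obtain ⟨F, rfl⟩ := hf
  refine ⟨F + C (1 - constantCoeff F), by simp, ?_⟩
  rw [← coeff_zero_eq_constantCoeff_apply, coeff_map, coeff_zero_eq_constantCoeff_apply] at hf0
  rw [map_add, map_C, map_sub, map_one, hf0, sub_self, map_zero, add_zero]

theorem coe_trunc_mem_range_map {f : S⟦X⟧} {n : ℕ} (hf : ∀ k < n, coeff k f ∈ σ.range) :
    (trunc n f : S⟦X⟧) ∈ (map σ).range := by
  refine mem_range_map_iff.2 fun k => ?_
  rw [Polynomial.coeff_coe, coeff_trunc]
  split_ifs with hk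
  · obtain ⟨a, ha⟩ := hf k hk
    exact ⟨a, ha.symm⟩
  · exact ⟨0, (map_zero σ).symm⟩

theorem coeff_mul_mem_range_of_lt {u v : S⟦X⟧} {n : ℕ} (hu : ∀ k < n, coeff k u ∈ σ.range)
    (hv : ∀ k < n, coeff k v ∈ σ.range) {k : ℕ} (hk : k < n) : coeff k (u * v) ∈ σ.range := by
  obtain ⟨U, hU⟩ := coe_trunc_mem_range_map hu
  obtain ⟨V, hV⟩ := coe_trunc_mem_range_map hv
  rw [coeff_mul_eq_coeff_trunc_mul_trunc u v hk, ← hU, ← hV, ← map_mul, coeff_map]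
  exact ⟨_, rfl⟩

theorem coeff_trunc_pow_of_lt (f : R⟦X⟧) (a : ℕ) {n N : ℕ} (h : n < N) :
    coeff n ((trunc N f : R⟦X⟧) ^ a) = coeff n (f ^ a) := by
  rw [← coeff_coe_trunc_of_lt h, trunc_trunc_pow, coeff_coe_trunc_of_lt h]

theorem coeff_pow_eq_coeff_trunc_pow_add (f : R⟦X⟧) {n : ℕ} (hn : n ≠ 0) (p : ℕ) :
    coeff n (f ^ p) =
      coeff n ((trunc n f : R⟦X⟧) ^ p) + p * constantCoeff f ^ (p - 1) * coeff n f := by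
  set g : R⟦X⟧ := ↑(trunc n f)
  set t : R⟦X⟧ := mk fun i => coeff (i + n) f
  have hft : f = g + X ^ n * t := by rw [add_comm]; exact eq_X_pow_mul_shift_add_trunc n f
  have hg0 : constantCoeff g = constantCoeff f := by
    rw [← coeff_zero_eq_constantCoeff_apply, coeff_coe_trunc_of_lt (Nat.pos_of_ne_zero hn),
      coeff_zero_eq_constantCoeff_apply]
  -- `(g + y)^p ≡ g^p + p g^(p-1) y (mod y^2)`, and `y^2 = X^(2n) t^2` has no `x^n` term
  obtain ⟨r, hr⟩ := sq_dvd_add_pow_sub_sub (X ^ n * t) g p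
  have hsplit :
      f ^ p = g ^ p + X ^ n * (g ^ (p - 1) * t * (p : R⟦X⟧)) + X ^ (2 * n) * (t ^ 2 * r) := by
    rw [hft]
    linear_combination hr
  rw [hsplit, map_add, map_add, coeff_X_pow_mul', if_pos le_rfl, Nat.sub_self, coeff_X_pow_mul',
    if_neg (by omega), add_zero, coeff_zero_eq_constantCoeff_apply]
  simp [t, hg0, mul_comm, mul_left_comm]

theorem exists_eq_C_mul_X_mul {a : R} {D : R⟦X⟧}
    (h0 : constantCoeff D = 0) (h : ∀ n, a ∣ coeff n D) : ∃ H, D = C a * (X * H) := by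
  choose c hc using fun n => h (n + 1)
  refine ⟨mk c, ext fun n => ?_⟩
  rcases n with _ | n
  · simp [h0]
  · rw [coeff_C_mul, coeff_succ_X_mul, coeff_mk, hc]

end PowerSeries

section compPoly

variable {R : Type*} [CommRing R]

theorem coeff_compPoly_of_lt {g : R[X]} (hg : g.coeff 0 = 0) (f : R⟦X⟧) {n N : ℕ} (hn : n < N) :
    coeff n (compPoly f g) = ((trunc N f).comp g).coeff n := by
  rw [compPoly, coeff_mk, Polynomial.comp, eval₂_trunc_eq_sum_range, Polynomial.finsetSum_coeff]
  simp_rw [Polynomial.coeff_C_mul]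
  exact Finset.sum_subset (Finset.range_subset_range.2 hn) fun k _ hkn => by
    rw [Polynomial.coeff_pow_of_lt hg (by simpa using hkn), mul_zero]

theorem map_compPoly {S : Type*} [CommRing S] (σ : R →+* S) (f : R⟦X⟧) (g : R[X]) :
    map σ (compPoly f g) = compPoly (map σ f) (g.map σ) := by
  ext n
  simp [compPoly, ← Polynomial.map_pow]

theorem constantCoeff_compPoly (f : R⟦X⟧) (g : R[X]) :
    constantCoeff (compPoly f g) = constantCoeff f := by
  rw [← coeff_zero_eq_constantCoeff_apply, ← coeff_zero_eq_constantCoeff_apply, compPoly, coeff_mk]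
  simp

theorem coeff_compPoly_eq_add {f₁ f₂ : R⟦X⟧} (g : R[X]) {n : ℕ}
    (h : ∀ k < n, coeff k f₁ = coeff k f₂) :
    coeff n (compPoly f₁ g) =
      coeff n (compPoly f₂ g) + (coeff n f₁ - coeff n f₂) * (g ^ n).coeff n := by
  simp only [compPoly, coeff_mk, Finset.sum_range_succ]
  rw [Finset.sum_congr rfl fun k hk => by rw [h k (Finset.mem_range.1 hk)]]
  ring

end compPoly

section Frobenius

variable {p : ℕ} [Fact p.Prime] {A : Type*} [CommRing A] {φ : A →+* A} {G : A[X]}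

theorem map_comp_map_eq_pow {Q : Type*} [CommRing Q] [CharP Q p] {π : A →+* Q}
    (hπ : ∀ a, π (φ a) = π a ^ p) (hG : G.map π = Polynomial.X ^ p) (P : A[X]) :
    ((P.map φ).comp G).map π = (P.map π) ^ p := by
  rw [Polynomial.map_comp, hG, Polynomial.map_map,
    show π.comp φ = (frobenius Q p).comp π from RingHom.ext hπ, ← Polynomial.map_map,
    ← Polynomial.expand_eq_comp_X_pow, ← Polynomial.map_expand, Polynomial.map_frobenius_expand]

theorem natCast_dvd_coeff_compPoly_map_sub_coeff_pow (hφ : ∀ a, (p : A) ∣ φ a - a ^ p)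
    (hG0 : G.coeff 0 = 0) (hG : (p : A[X]) ∣ G - Polynomial.X ^ p) (F : A⟦X⟧) (n : ℕ) :
    (p : A) ∣ coeff n (compPoly (map φ F) G) - coeff n (F ^ p) := by
  by_cases hu : IsUnit (p : A)
  · exact hu.dvd
  have := CharP.quotient A p hu
  set π := Ideal.Quotient.mk (Ideal.span {(p : A)})
  have hπ : ∀ a, π (φ a) = π a ^ p := fun a => by
    rw [← map_pow, Ideal.Quotient.eq, Ideal.mem_span_singleton]
    exact hφ a
  have hGπ : G.map π = Polynomial.X ^ p := by
    obtain ⟨q, hq⟩ := hG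
    rw [← sub_eq_zero, ← Polynomial.map_X π, ← Polynomial.map_pow, ← Polynomial.map_sub, hq,
      Polynomial.map_mul, Polynomial.map_natCast,
      CharP.cast_eq_zero (A ⧸ Ideal.span {(p : A)})[X] p, zero_mul]
  rw [← Ideal.mem_span_singleton, ← Ideal.Quotient.eq, coeff_compPoly_of_lt hG0 _ n.lt_succ_self,
    trunc_map, ← coeff_trunc_pow_of_lt F p n.lt_succ_self, ← Polynomial.coe_pow,
    Polynomial.coeff_coe, ← Polynomial.coeff_map, ← Polynomial.coeff_map,
    map_comp_map_eq_pow hπ hGπ, Polynomial.map_pow]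

theorem exists_compPoly_map_eq_pow_mul (hφ : ∀ a, (p : A) ∣ φ a - a ^ p) (hG0 : G.coeff 0 = 0)
    (hG : (p : A[X]) ∣ G - Polynomial.X ^ p) {F : A⟦X⟧} (hF : constantCoeff F = 1) :
    ∃ H : A⟦X⟧, compPoly (map φ F) G = F ^ p * (1 + (p : A⟦X⟧) * (X * H)) := by
  have hD0 : constantCoeff (compPoly (map φ F) G - F ^ p) = 0 := by
    rw [map_sub, constantCoeff_compPoly, ← coeff_zero_eq_constantCoeff_apply, coeff_map,
      coeff_zero_eq_constantCoeff_apply, map_pow, hF, map_one, one_pow, sub_self]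
  obtain ⟨D, hD⟩ :=
    exists_eq_C_mul_X_mul hD0 (natCast_dvd_coeff_compPoly_map_sub_coeff_pow hφ hG0 hG F)
  have hFu : IsUnit F := isUnit_iff_constantCoeff.2 (hF ▸ isUnit_one)
  have hFp : (F * ↑hFu.unit⁻¹) ^ p = 1 := by rw [hFu.mul_val_inv, one_pow]
  refine ⟨D * ↑hFu.unit⁻¹ ^ p, ?_⟩
  rw [map_natCast] at hD
  linear_combination hD - (p : A⟦X⟧) * X * D * hFp

end Frobenius

section Integrality

variable {A B : Type*} [CommRing A] [CommRing B] {σ : A →+* B} {φ : A →+* A} {ψ : B →+* B}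

theorem mem_range_of_eq_mul_add (hψ : ∀ a, ψ (σ a) = σ (φ a)) {s : ℕ} (hs : s ≠ 0)
    (hψs : ψ ^ s = 1) {w e : A} (hw : w ∈ (⊥ : Ideal A).jacobson) {b : B}
    (hb : b = ψ b * σ w + σ e) : b ∈ σ.range := by
  have hiter : ∀ k a, (ψ ^ k) (σ a) = σ ((φ ^ k) a) := fun k a => by
    simp only [RingHom.coe_pow]
    exact ((Function.Semiconj.iterate_right (fun a => (hψ a).symm) k) a).symm
  have key : ∀ k, ∃ u, ∃ v ∈ (⊥ : Ideal A).jacobson, b = σ u + σ v * (ψ ^ (k + 1)) b := by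
    intro k
    induction k with
    | zero => exact ⟨e, w, hw, by rw [zero_add, pow_one]; linear_combination hb⟩
    | succ k ih =>
      obtain ⟨u, v, hv, huv⟩ := ih
      have h' := congrArg (ψ ^ (k + 1)) hb
      rw [map_add, map_mul, hiter, hiter, ← Function.comp_apply (f := ψ ^ (k + 1)),
        ← RingHom.coe_mul, ← pow_succ] at h'
      refine ⟨u + v * (φ ^ (k + 1)) e, v * (φ ^ (k + 1)) w, Ideal.mul_mem_right _ _ hv, ?_⟩
      rw [map_add, map_mul, map_mul]
      linear_combination huv + σ v * h'
  obtain ⟨u, v, hv, huv⟩ := key (s - 1)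
  rw [Nat.sub_add_cancel (Nat.one_le_iff_ne_zero.2 hs), hψs, RingHom.coe_one, id] at huv
  have hunit : IsUnit (1 - v) :=
    Ideal.isUnit_of_sub_one_mem_jacobson_bot _ (by rw [sub_sub_cancel_left]; exact neg_mem hv)
  refine ⟨u * ↑hunit.unit⁻¹, ?_⟩
  calc σ (u * ↑hunit.unit⁻¹) = b * σ ((1 - v) * ↑hunit.unit⁻¹) := by
        rw [map_mul, map_mul, map_sub, map_one]
        linear_combination -σ ↑hunit.unit⁻¹ * huv
    _ = b := by rw [hunit.mul_val_inv, map_one, mul_one]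

variable {f : B⟦X⟧} {n : ℕ}

theorem exists_coeff_pow_mul_one_add_eq (hf0 : constantCoeff f = 1) {h : B⟦X⟧}
    (hh : h ∈ (map σ).range) (hn : n ≠ 0) (hlow : ∀ k < n, coeff k f ∈ σ.range) (p : ℕ) :
    ∃ d, coeff n (f ^ p * (1 + (p : B⟦X⟧) * (X * h))) =
      coeff n ((trunc n f : B⟦X⟧) ^ p) + p * coeff n f + p * σ d := by
  obtain ⟨m, rfl⟩ := Nat.exists_eq_succ_of_ne_zero hn
  have hfp : ∀ k < m + 1, coeff k (f ^ p) ∈ σ.range := fun k hk => by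
    obtain ⟨P, hP⟩ := coe_trunc_mem_range_map hlow
    rw [← coeff_trunc_pow_of_lt f p hk, ← hP, ← map_pow, coeff_map]
    exact ⟨_, rfl⟩
  obtain ⟨H, rfl⟩ := hh
  obtain ⟨d, hd⟩ := coeff_mul_mem_range_of_lt hfp (fun k _ => ⟨coeff k H, (coeff_map σ k H).symm⟩)
    m.lt_succ_self
  refine ⟨d, ?_⟩
  rw [mul_add, mul_one, map_add, coeff_pow_eq_coeff_trunc_pow_add f hn, hf0, one_pow, mul_one,
    ← map_natCast (C (R := B)), mul_left_comm, coeff_C_mul, mul_left_comm, coeff_succ_X_mul, hd]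

variable {p : ℕ} [Fact p.Prime] {G : A[X]}

theorem exists_coeff_compPoly_map_eq (hψ : ∀ a, ψ (σ a) = σ (φ a))
    (hφ : ∀ a, (p : A) ∣ φ a - a ^ p) (hG0 : G.coeff 0 = 0)
    (hG : (p : A[X]) ∣ G - Polynomial.X ^ p) (hlow : ∀ k < n, coeff k f ∈ σ.range) :
    ∃ c, coeff n (compPoly (map ψ f) (G.map σ)) =
      coeff n ((trunc n f : B⟦X⟧) ^ p) + p * σ c + ψ (coeff n f) * σ (G.coeff 1) ^ n := by
  obtain ⟨P, hP⟩ := coe_trunc_mem_range_map hlow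
  obtain ⟨c, hc⟩ := natCast_dvd_coeff_compPoly_map_sub_coeff_pow hφ hG0 hG P n
  have hψP : map ψ (trunc n f : B⟦X⟧) = map σ (map φ P) := by
    ext k
    simp only [← hP, coeff_map, hψ]
  have htop : coeff n (map ψ (trunc n f : B⟦X⟧)) = 0 := by
    rw [coeff_map, Polynomial.coeff_coe, coeff_trunc, if_neg (lt_irrefl n), map_zero]
  have hsplit : coeff n (compPoly (map ψ f) (G.map σ)) =
      coeff n (compPoly (map σ (map φ P)) (G.map σ)) + ψ (coeff n f) * σ (G.coeff 1) ^ n := by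
    rw [coeff_compPoly_eq_add (f₂ := map ψ (trunc n f)) _ fun k hk => by
        rw [coeff_map, coeff_map, coeff_coe_trunc_of_lt hk],
      htop, sub_zero, hψP, coeff_map,
      Polynomial.coeff_pow_self (by rw [Polynomial.coeff_map, hG0, map_zero]),
      Polynomial.coeff_map]
  refine ⟨c, ?_⟩
  rw [hsplit, ← map_compPoly, coeff_map, eq_add_of_sub_eq' hc, ← hP, ← map_pow (map σ),
    coeff_map, map_add, map_mul, map_natCast]

theorem exists_coeff_eq_mul_add_of_compPoly_eq (hpB : IsUnit (p : B))
    (hψ : ∀ a, ψ (σ a) = σ (φ a)) (hφ : ∀ a, (p : A) ∣ φ a - a ^ p) (hG0 : G.coeff 0 = 0)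
    (hG : (p : A[X]) ∣ G - Polynomial.X ^ p) (hf0 : constantCoeff f = 1) {h : B⟦X⟧}
    (hh : h ∈ (map σ).range)
    (heq : compPoly (map ψ f) (G.map σ) = f ^ p * (1 + (p : B⟦X⟧) * (X * h)))
    {m : ℕ} (hlow : ∀ k < m + 2, coeff k f ∈ σ.range) :
    ∃ w ∈ Ideal.span {(p : A)}, ∃ e, coeff (m + 2) f = ψ (coeff (m + 2) f) * σ w + σ e := by
  obtain ⟨c, hc⟩ := exists_coeff_compPoly_map_eq hψ hφ hG0 hG hlow
  obtain ⟨d, hd⟩ := exists_coeff_pow_mul_one_add_eq hf0 hh (m + 1).succ_ne_zero hlow p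
  obtain ⟨q, hq⟩ : (p : A) ∣ G.coeff 1 := by
    obtain ⟨r, hr⟩ := hG
    refine ⟨r.coeff 1, ?_⟩
    simpa [Polynomial.coeff_X_pow, (Fact.out : p.Prime).one_lt.ne] using
      congrArg (Polynomial.coeff · 1) hr
  have key := congrArg (coeff (m + 2)) heq
  rw [hc, hd, hq] at key
  refine ⟨p ^ (m + 1) * q ^ (m + 2), Ideal.mul_mem_right _ _ <| Ideal.pow_mem_of_mem _
    (Ideal.mem_span_singleton_self _) _ m.succ_pos, c - d, hpB.mul_left_cancel ?_⟩
  rw [map_mul, map_pow, map_pow, map_natCast, map_sub]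
  rw [map_mul, map_natCast] at key
  linear_combination -key

theorem mem_range_map_of_compPoly_eq (hpB : IsUnit (p : B))
    (hpJ : Ideal.span {(p : A)} ≤ (⊥ : Ideal A).jacobson) (hψ : ∀ a, ψ (σ a) = σ (φ a))
    {s : ℕ} (hs : s ≠ 0) (hψs : ψ ^ s = 1) (hφ : ∀ a, (p : A) ∣ φ a - a ^ p)
    (hG0 : G.coeff 0 = 0) (hG : (p : A[X]) ∣ G - Polynomial.X ^ p) (hf0 : constantCoeff f = 1)
    (hf1 : coeff 1 f ∈ σ.range) {h : B⟦X⟧} (hh : h ∈ (map σ).range)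
    (heq : compPoly (map ψ f) (G.map σ) = f ^ p * (1 + (p : B⟦X⟧) * (X * h))) :
    f ∈ (map σ).range := by
  suffices hcoeff : ∀ n, coeff n f ∈ σ.range from
    mem_range_map_iff.2 fun n => (RingHom.mem_range.1 (hcoeff n)).imp fun _ => Eq.symm
  intro n
  induction n using Nat.strong_induction_on with
  | _ n ih =>
    match n with
    | 0 => exact ⟨1, by rw [map_one, coeff_zero_eq_constantCoeff_apply, hf0]⟩
    | 1 => exact hf1
    | m + 2 =>
      obtain ⟨w, hw, e, he⟩ :=
        exists_coeff_eq_mul_add_of_compPoly_eq hpB hψ hφ hG0 hG hf0 hh heq ih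
      exact mem_range_of_eq_mul_add hψ hs hψs (hpJ hw) he

end Integrality

theorem IsLocalization.pow_eq_one_of_iterate_eq_id {A B : Type*} [CommRing A] [CommRing B]
    [Algebra A B] (M : Submonoid A) [IsLocalization M B] {φ : A →+* A} {ψ : B →+* B}
    (hψ : ∀ a, ψ (algebraMap A B a) = algebraMap A B (φ a)) {s : ℕ} (hφs : ∀ a, φ^[s] a = a) :
    ψ ^ s = 1 :=
  IsLocalization.ringHom_ext M <| RingHom.ext fun a => by
    rw [RingHom.comp_apply, RingHom.coe_pow,
      ← (Function.Semiconj.iterate_right (fun a => (hψ a).symm) s).eq, hφs]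
    rfl

theorem statement17_general (p : ℕ) (hp : p.Prime) (A : Type*) [CommRing A]
    [IsAdicComplete (Ideal.span {(p : A)}) A]
    (φ : A →+* A) (hord : ∃ s : ℕ, 1 ≤ s ∧ ∀ a : A, (⇑φ)^[s] a = a)
    (hfrob : ∀ a : A, ∃ b : A, φ a - a ^ p = (p : A) * b)
    (ζ : A)
    (B : Type*) [CommRing B] [Algebra A B] [IsLocalization.Away ((p : A)) B]
    (ψ : B →+* B) (hψ : ∀ a : A, ψ (algebraMap A B a) = algebraMap A B (φ a))
    (f : PowerSeries B) (hf0 : PowerSeries.constantCoeff f = 1) :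
    (∀ n : ℕ, ∃ a : A, PowerSeries.coeff n f = algebraMap A B a) ↔
      ((∃ a : A, PowerSeries.coeff 1 f = algebraMap A B a) ∧
        ∃ h : PowerSeries B,
          (∀ n : ℕ, ∃ a : A, PowerSeries.coeff n h = algebraMap A B a) ∧
          compPoly (PowerSeries.map ψ f)
              ((Polynomial.C (algebraMap A B ζ) + Polynomial.X) ^ p -
                Polynomial.C ((algebraMap A B ζ) ^ p))
            = f ^ p * (1 + (p : PowerSeries B) * (PowerSeries.X * h))) := by
  have := Fact.mk hp
  obtain ⟨s, hs, hφs⟩ := hord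
  set σ := algebraMap A B
  set G : A[X] := (Polynomial.C ζ + Polynomial.X) ^ p - Polynomial.C (ζ ^ p)
  have hG0 : G.coeff 0 = 0 := Polynomial.coeff_zero_C_add_X_pow_sub_C_pow ζ p
  have hG : (p : A[X]) ∣ G - Polynomial.X ^ p :=
    Polynomial.natCast_dvd_C_add_X_pow_sub_C_pow_sub_X_pow hp ζ
  have hpB : IsUnit (p : B) := map_natCast σ p ▸ IsLocalization.Away.algebraMap_isUnit (p : A)
  rw [show (Polynomial.C (σ ζ) + Polynomial.X) ^ p - Polynomial.C (σ ζ ^ p) = G.map σ by simp [G]]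
  simp only [← mem_range_map_iff]
  constructor
  · intro hf
    obtain ⟨F, hF0, rfl⟩ := exists_map_eq_and_constantCoeff_eq_one hf hf0
    obtain ⟨H, hH⟩ := exists_compPoly_map_eq_pow_mul hfrob hG0 hG hF0
    refine ⟨⟨coeff 1 F, coeff_map σ 1 F⟩, map σ H, ⟨H, rfl⟩, ?_⟩
    have hψF : map ψ (map σ F) = map σ (map φ F) := by
      ext n
      simp only [coeff_map, hψ]
    rw [hψF, ← map_compPoly, hH]
    simp
  · rintro ⟨⟨a, ha⟩, h, hh, heq⟩
    exact mem_range_map_of_compPoly_eq hpB (IsAdicComplete.le_jacobson_bot _) hψ (by omega)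
      (IsLocalization.pow_eq_one_of_iterate_eq_id (.powers (p : A)) hψ hφs) hfrob hG0 hG hf0
      ⟨a, ha.symm⟩ hh heq

theorem statement17 (p : ℕ) (hp : p.Prime) (A : Type*) [CommRing A]
    (htf : ∀ a : A, (p : A) * a = 0 → a = 0)
    [IsAdicComplete (Ideal.span {(p : A)}) A]
    (φ : A →+* A) (hord : ∃ s : ℕ, 1 ≤ s ∧ ∀ a : A, (⇑φ)^[s] a = a)
    (hfrob : ∀ a : A, ∃ b : A, φ a - a ^ p = (p : A) * b)
    (ζ : A) (hζ : φ ζ = ζ ^ p)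
    (B : Type*) [CommRing B] [Algebra A B] [IsLocalization.Away ((p : A)) B]
    (ψ : B →+* B) (hψ : ∀ a : A, ψ (algebraMap A B a) = algebraMap A B (φ a))
    (f : PowerSeries B) (hf0 : PowerSeries.constantCoeff f = 1) :
    (∀ n : ℕ, ∃ a : A, PowerSeries.coeff n f = algebraMap A B a) ↔
      ((∃ a : A, PowerSeries.coeff 1 f = algebraMap A B a) ∧
        ∃ h : PowerSeries B,
          (∀ n : ℕ, ∃ a : A, PowerSeries.coeff n h = algebraMap A B a) ∧
          compPoly (PowerSeries.map ψ f)
              ((Polynomial.C (algebraMap A B ζ) + Polynomial.X) ^ p -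
                Polynomial.C ((algebraMap A B ζ) ^ p))
            = f ^ p * (1 + (p : PowerSeries B) * (PowerSeries.X * h))) :=
  statement17_general p hp A φ hord hfrob ζ B ψ hψ f hf0
end

section
/- Let R be a torsion-free commutative ring, and let 𝐇_R := lim_n R[q]/((q;q)_n R[q]) be the (naive) Habiro ring of R, where (q;q)_n := ∏_{j=1}^n (1−q^j). For each m ≥ 1 set R[ζ_m] := R[X]/(Φ_m(X)) with ζ_m the class of X, and let ι_m : 𝐇_R → R[ζ_m][[u]] be the ring homomorphism induced by the maps R[q]/((q;q)_n) → R[ζ_m][u]/(u^j) sending q to ζ_m(1−u); these are well defined because (q;q)_n maps into the ideal (u^j) whenever n ≥ mj. Then the combined map ι = (ι_m)_{m≥1} : 𝐇_R → ∏_{m≥1} R[ζ_m][[u]] is injective. -/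
/-!
STATEMENT 18: For a torsion-free commutative ring `R`, the combined expansion map
`ι = (ι_m)` from the naive Habiro ring `𝐇_R = lim_n R[q]/((q;q)_n)` to
`∏_m R[ζ_m][[u]]` (where `q ↦ ζ_m(1-u)` and `R[ζ_m] = R[X]/(Φ_m)`) is injective.
An element of `𝐇_R` is a compatible family `x = (x_n)`; injectivity of the additive map
`ι` is expressed as: if all coefficients of all expansions of `x` vanish, then `x = 0`.
The coefficient of `u^j` of `ι_m(x)` is computed from any representative `P` of `x_n`
with `n ≥ m(j+1)` (it is then independent of the choices).
-/

/-- `(q;q)_n = ∏_{j=1}^n (1 - q^j)` as a polynomial. -/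
noncomputable def pochP (R : Type*) [CommRing R] (n : ℕ) : Polynomial R :=
  ∏ j ∈ Finset.range n, (1 - Polynomial.X ^ (j + 1))

/-- The ideal `((q;q)_n)` of `R[q]`. -/
noncomputable def pochIdeal (R : Type*) [CommRing R] (n : ℕ) : Ideal (Polynomial R) :=
  Ideal.span {pochP R n}

theorem pochIdeal_le (R : Type*) [CommRing R] (n : ℕ) :
    pochIdeal R (n + 1) ≤ pochIdeal R n := by
  apply Ideal.span_singleton_le_span_singleton.mpr
  exact ⟨1 - Polynomial.X ^ (n + 1), Finset.prod_range_succ _ n⟩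

/-- `R[ζ_m] := R[X]/(Φ_m)`. -/
abbrev cycQuot (R : Type*) [CommRing R] (m : ℕ) :=
  Polynomial R ⧸ Ideal.span {Polynomial.cyclotomic m R}

/-- The class `ζ_m` of `X` in `R[ζ_m]`. -/
noncomputable def zetaBar (R : Type*) [CommRing R] (m : ℕ) : cycQuot R m :=
  Ideal.Quotient.mk _ Polynomial.X

/-- The expansion map `R[q] → R[ζ_m][[u]]`, `q ↦ ζ_m(1-u)`. -/
noncomputable def expandAt (R : Type*) [CommRing R] (m : ℕ) :
    Polynomial R →+* PowerSeries (cycQuot R m) :=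
  Polynomial.eval₂RingHom
    ((PowerSeries.C (R := cycQuot R m)).comp
      ((Ideal.Quotient.mk (Ideal.span {Polynomial.cyclotomic m R})).comp
        (Polynomial.C : R →+* Polynomial R)))
    (PowerSeries.C (R := cycQuot R m) (zetaBar R m) * (1 - PowerSeries.X))

/-!
Let `P` represent `x_n`. The `u^j`-coefficient of `ι_m(P)` is `(-ζ_m)^j (D^{(j)} P)(ζ_m)`, with
`D^{(j)}` the `j`-th Hasse derivative (Taylor expansion of `P` at `ζ_m`), so the hypothesis says
that `Φ_m` divides `D^{(j)} P` for all `j < ⌊n/m⌋`. After inverting the nonzero integers, which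
loses nothing since `R` is torsion-free, `Φ_m` is separable, and a separable polynomial dividing
the first `e` Hasse derivatives of `P` has its `e`-th power dividing `P`. The `Φ_m` are pairwise
coprime over `ℚ`, and `∏_{m ≤ n} Φ_m^{⌊n/m⌋} = ∏_{k ≤ n} (q^k - 1) = ±(q;q)_n` is monic,
so `(q;q)_n` divides `P` already over `R`.
-/

open Polynomial Finset

namespace Polynomial

section HasseDeriv

variable {A : Type*} [CommRing A]

theorem hasseDeriv_map {B : Type*} [CommRing B] (f : A →+* B) (k : ℕ) (p : A[X]) :
    hasseDeriv k (p.map f) = (hasseDeriv k p).map f := by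
  ext n
  simp [hasseDeriv_coeff]

theorem dvd_hasseDeriv_pow_mul (Φ Q : A[X]) {k e : ℕ} (hk : k < e) :
    Φ ∣ hasseDeriv k (Φ ^ e * Q) := by
  induction e generalizing k with
  | zero => omega
  | succ e ih =>
    rw [pow_succ', mul_assoc, hasseDeriv_mul]
    refine Finset.dvd_sum fun ij hij => ?_
    rw [HasAntidiagonal.mem_antidiagonal] at hij
    rcases Nat.eq_zero_or_pos ij.1 with h | h
    · rw [h, hasseDeriv_zero']
      exact dvd_mul_right _ _
    · exact (ih (by omega)).mul_left _

theorem dvd_hasseDeriv_pow_mul_sub (Φ Q : A[X]) (e : ℕ) :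
    Φ ∣ hasseDeriv e (Φ ^ e * Q) - derivative Φ ^ e * Q := by
  induction e with
  | zero => simp
  | succ e ih =>
    rw [pow_succ, mul_comm (Φ ^ e), mul_assoc, hasseDeriv_mul,
      Nat.sum_antidiagonal_eq_sum_range_succ
        (fun i j => hasseDeriv i Φ * hasseDeriv j (Φ ^ e * Q)),
      sum_range_succ', sum_range_succ', hasseDeriv_zero', hasseDeriv_one']
    simp only [Nat.add_sub_cancel, Nat.sub_zero]
    -- Only the term `Φ' * D^e (Φ^e Q)` survives modulo `Φ`.
    have hsum := Finset.dvd_sum fun k (hk : k ∈ range e) =>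
      (dvd_hasseDeriv_pow_mul Φ Q (k := e + 1 - (k + 1 + 1)) (e := e)
        (by rw [mem_range] at hk; omega)).mul_left (hasseDeriv (k + 1 + 1) Φ)
    convert dvd_add (dvd_add hsum (ih.mul_left (derivative Φ)))
      (dvd_mul_right Φ (hasseDeriv (e + 1) (Φ ^ e * Q))) using 1
    ring

theorem Separable.pow_dvd_of_dvd_hasseDeriv {Φ P : A[X]} (hΦ : Φ.Separable) {e : ℕ}
    (h : ∀ j < e, Φ ∣ hasseDeriv j P) : Φ ^ e ∣ P := by
  induction e with
  | zero => simp
  | succ e ih =>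
    obtain ⟨Q, rfl⟩ := ih fun j hj => h j (by omega)
    have hQ : Φ ∣ derivative Φ ^ e * Q := by
      have := dvd_sub (h e (by omega)) (dvd_hasseDeriv_pow_mul_sub Φ Q e)
      rwa [sub_sub_cancel] at this
    rw [pow_succ]
    exact mul_dvd_mul_left _ (hΦ.pow_right.dvd_of_dvd_mul_left hQ)

end HasseDeriv

section Cyclotomic

variable (A : Type*) [CommRing A]

theorem prod_Ioc_X_pow_sub_one_eq_prod_cyclotomic_pow (n : ℕ) :
    ∏ k ∈ Ioc 0 n, ((X : A[X]) ^ k - 1) = ∏ d ∈ Ioc 0 n, cyclotomic d A ^ (n / d) := by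
  rw [prod_congr rfl fun k hk => (prod_cyclotomic_eq_X_pow_sub_one (mem_Ioc.mp hk).1 A).symm,
    prod_comm' (t' := Ioc 0 n) (s' := fun d => {k ∈ Ioc 0 n | d ∣ k})]
  · refine prod_congr rfl fun d _ => ?_
    rw [prod_const, Nat.Ioc_filter_dvd_card_eq_div]
  · intro k d
    simp only [mem_Ioc, Nat.mem_divisors, mem_filter]
    constructor
    · rintro ⟨⟨hk0, hkn⟩, hdk, -⟩
      exact ⟨⟨⟨hk0, hkn⟩, hdk⟩, Nat.pos_of_dvd_of_pos hdk hk0,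
        (Nat.le_of_dvd hk0 hdk).trans hkn⟩
    · rintro ⟨⟨⟨hk0, hkn⟩, hdk⟩, -⟩
      exact ⟨⟨hk0, hkn⟩, hdk, hk0.ne'⟩

theorem monic_prod_Ioc_X_pow_sub_one (n : ℕ) : (∏ k ∈ Ioc 0 n, ((X : A[X]) ^ k - 1)).Monic :=
  monic_prod_of_monic _ _ fun k hk => by
    simpa using monic_X_pow_sub_C (1 : A) (mem_Ioc.mp hk).1.ne'

variable {A}

theorem separable_cyclotomic_of_ratHom (f : ℚ →+* A) {m : ℕ} (hm : 0 < m) :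
    (cyclotomic m A).Separable := by
  have : NeZero (m : ℚ) := ⟨by exact_mod_cast hm.ne'⟩
  simpa [map_cyclotomic] using (separable_cyclotomic m ℚ).map (f := f)

theorem isCoprime_cyclotomic_of_ratHom (f : ℚ →+* A) {m n : ℕ} (h : m ≠ n) :
    IsCoprime (cyclotomic m A) (cyclotomic n A) := by
  simpa [map_cyclotomic] using (cyclotomic.isCoprime_rat h).map (mapRingHom f)

end Cyclotomic

end Polynomial

theorem expandAt_eq_coe_taylor (R : Type*) [CommRing R] (m : ℕ) (P : R[X]) :
    expandAt R m P = ((taylor (zetaBar R m) (P.map (Ideal.Quotient.mk _ |>.comp C))).comp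
      (C (-zetaBar R m) * X) : (cycQuot R m)[X]) := by
  rw [taylor_apply, comp_assoc, comp, eval₂_map, ← coeToPowerSeries.ringHom_apply, hom_eval₂]
  simp only [coeToPowerSeries.ringHom_apply, add_comp, X_comp, C_comp]
  rw [expandAt, coe_eval₂RingHom]
  congr 1
  · ext a
    simp
  · push_cast [map_neg]
    ring

theorem coeff_expandAt (R : Type*) [CommRing R] (m : ℕ) (P : R[X]) (j : ℕ) :
    PowerSeries.coeff j (expandAt R m P) =
      (-zetaBar R m) ^ j * Ideal.Quotient.mk (Ideal.span {cyclotomic m R}) (hasseDeriv j P) := by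
  rw [expandAt_eq_coe_taylor, Polynomial.coeff_coe, comp_C_mul_X_coeff, taylor_coeff,
    hasseDeriv_map, eval_map, mul_comm]
  congr 1
  conv_rhs => rw [← eval₂_C_X (p := hasseDeriv j P), hom_eval₂]
  rfl

theorem zetaBar_pow_self (R : Type*) [CommRing R] (m : ℕ) : zetaBar R m ^ m = 1 := by
  rw [zetaBar, ← map_pow, ← map_one (Ideal.Quotient.mk _), Ideal.Quotient.eq,
    Ideal.mem_span_singleton]
  exact cyclotomic.dvd_X_pow_sub_one m R

theorem cyclotomic_dvd_hasseDeriv_of_coeff_expandAt_eq_zero {R : Type*} [CommRing R] {m : ℕ}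
    (hm : 0 < m) {P : R[X]} {j : ℕ} (h : PowerSeries.coeff j (expandAt R m P) = 0) :
    cyclotomic m R ∣ hasseDeriv j P := by
  have hζ : IsUnit (-zetaBar R m) := (IsUnit.of_pow_eq_one (zetaBar_pow_self R m) hm.ne').neg
  rw [coeff_expandAt, (hζ.pow j).mul_right_eq_zero, Ideal.Quotient.eq_zero_iff_mem] at h
  exact Ideal.mem_span_singleton.mp h

theorem IsAddTorsionFree.of_nsmul_eq_zero {M : Type*} [AddCommGroup M]
    (h : ∀ k : ℕ, 0 < k → ∀ a : M, k • a = 0 → a = 0) : IsAddTorsionFree M :=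
  ⟨fun k hk a b hab => sub_eq_zero.mp <|
    h k (Nat.pos_of_ne_zero hk) _ (by rw [nsmul_sub]; exact sub_eq_zero.mpr hab)⟩

section RatLocalization

variable (R : Type*) [CommRing R]

abbrev RatLocalization := Localization ((nonZeroDivisors ℤ).map (Int.castRingHom R))

noncomputable def RatLocalization.ofRat : ℚ →+* RatLocalization R :=
  IsLocalization.map (M := nonZeroDivisors ℤ) (S := ℚ) (Q := RatLocalization R)
    (Int.castRingHom R) (Submonoid.le_comap_map _)

theorem RatLocalization.algebraMap_injective [IsAddTorsionFree R] :
    Function.Injective (algebraMap R (RatLocalization R)) := by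
  refine IsLocalization.injective (M := (nonZeroDivisors ℤ).map (Int.castRingHom R)) _ ?_
  rintro _ ⟨d, hd, rfl⟩
  rw [mem_nonZeroDivisors_iff_right]
  intro a ha
  rwa [eq_intCast, mul_comm, ← zsmul_eq_mul, IsAddTorsionFree.zsmul_eq_zero_iff_right
    (nonZeroDivisors.ne_zero hd)] at ha

end RatLocalization

theorem pochP_eq_neg_one_pow_mul (R : Type*) [CommRing R] (n : ℕ) :
    pochP R n = (-1) ^ n * ∏ k ∈ Ioc 0 n, ((X : R[X]) ^ k - 1) := by
  have hIoc : ∏ k ∈ Ioc 0 n, ((X : R[X]) ^ k - 1) =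
      ∏ j ∈ range n, ((X : R[X]) ^ (j + 1) - 1) := by
    rw [range_eq_Ico, prod_Ico_add' (fun k => (X : R[X]) ^ k - 1) 0 n 1]
    rfl
  rw [hIoc, pochP, show ((-1 : R[X]) ^ n) = ∏ _j ∈ range n, (-1 : R[X]) by simp,
    ← prod_mul_distrib]
  exact prod_congr rfl fun j _ => by ring

theorem pochP_dvd_of_cyclotomic_dvd_hasseDeriv {R : Type*} [CommRing R] [IsAddTorsionFree R]
    {n : ℕ} {P : R[X]} (h : ∀ m ∈ Ioc 0 n, ∀ j < n / m, cyclotomic m R ∣ hasseDeriv j P) :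
    pochP R n ∣ P := by
  set f := algebraMap R (RatLocalization R)
  have hmap : (∏ k ∈ Ioc 0 n, ((X : R[X]) ^ k - 1)).map f =
      ∏ m ∈ Ioc 0 n, cyclotomic m (RatLocalization R) ^ (n / m) := by
    simp only [prod_Ioc_X_pow_sub_one_eq_prod_cyclotomic_pow, Polynomial.map_prod,
      Polynomial.map_pow, map_cyclotomic]
  have hdvd : ∏ k ∈ Ioc 0 n, ((X : R[X]) ^ k - 1) ∣ P := by
    rw [← map_dvd_map f (RatLocalization.algebraMap_injective R)
      (monic_prod_Ioc_X_pow_sub_one R n), hmap]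
    refine Finset.prod_dvd_of_coprime (fun m _ m' _ hmm' => ?_) fun m hm => ?_
    · exact (isCoprime_cyclotomic_of_ratHom (RatLocalization.ofRat R) hmm').pow
    · refine (separable_cyclotomic_of_ratHom (RatLocalization.ofRat R) (mem_Ioc.mp hm).1)
        |>.pow_dvd_of_dvd_hasseDeriv fun j hj => ?_
      rw [hasseDeriv_map, ← map_cyclotomic m f]
      exact Polynomial.map_dvd f (h m hm j hj)
  rw [pochP_eq_neg_one_pow_mul R n]
  exact ((isUnit_neg_one (α := R[X])).pow n).mul_left_dvd.mpr hdvd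

theorem statement18_general (R : Type*) [CommRing R]
    (htf : ∀ (k : ℕ), 0 < k → ∀ a : R, k • a = 0 → a = 0)
    (x : ∀ n : ℕ, Polynomial R ⧸ pochIdeal R n)
    (hvanish : ∀ m : ℕ, 1 ≤ m → ∀ j n : ℕ, m * (j + 1) ≤ n →
      ∀ P : Polynomial R, Ideal.Quotient.mk (pochIdeal R n) P = x n →
        PowerSeries.coeff (R := cycQuot R m) j (expandAt R m P) = 0) :
    ∀ n : ℕ, x n = 0 := by
  have : IsAddTorsionFree R := IsAddTorsionFree.of_nsmul_eq_zero htf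
  intro n
  obtain ⟨P, hP⟩ := Ideal.Quotient.mk_surjective (x n)
  rw [← hP, Ideal.Quotient.eq_zero_iff_mem, pochIdeal, Ideal.mem_span_singleton]
  refine pochP_dvd_of_cyclotomic_dvd_hasseDeriv fun m hm j hj => ?_
  have hm : 0 < m := (mem_Ioc.mp hm).1
  refine cyclotomic_dvd_hasseDeriv_of_coeff_expandAt_eq_zero hm (hvanish m hm j n ?_ P hP)
  rw [mul_comm]
  exact (Nat.le_div_iff_mul_le hm).mp hj

theorem statement18 (R : Type*) [CommRing R]
    (htf : ∀ (k : ℕ), 0 < k → ∀ a : R, k • a = 0 → a = 0)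
    (x : ∀ n : ℕ, Polynomial R ⧸ pochIdeal R n)
    (hcomp : ∀ n : ℕ,
      Ideal.Quotient.factor (pochIdeal_le R n)
        (x (n + 1)) = x n)
    (hvanish : ∀ m : ℕ, 1 ≤ m → ∀ j n : ℕ, m * (j + 1) ≤ n →
      ∀ P : Polynomial R, Ideal.Quotient.mk (pochIdeal R n) P = x n →
        PowerSeries.coeff (R := cycQuot R m) j (expandAt R m P) = 0) :
    ∀ n : ℕ, x n = 0 :=
  statement18_general R htf x hvanish
end
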